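/- arXiv:1602.00605 — 2 statements merged into one kernel-verified Lean document; each statement's English description precedes it below -/
import Mathlib

section
/- Let κ be an uncountable cardinal with κ^{<κ} = κ. There exists a club C_EF ⊆ κ such that for every α ∈ C_EF, the binary relation on structures with domain κ (in a countable relational vocabulary) defined by '(𝒜,ℬ) is in the relation iff player II has a winning strategy in EF^α_ω(𝒜↾α, ℬ↾α)' is an equivalence relation. -/
noncomputable section

open Cardinal Set FirstOrder

namespace GenCantor

/-- The set of ordinals below `κ`, used as the domain `κ` of coded structures. -/
abbrev O (κ : Cardinal.{0}) : Type 1 := ↥(Set.Iio κ.ord)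

/-- The generalized Cantor space `2^κ`. -/
abbrev Point (κ : Cardinal.{0}) : Type 1 := O κ → Bool

/-- `C` is a club (closed and unbounded) subset of `κ`. -/
def IsClub (κ : Cardinal.{0}) (C : Set Ordinal) : Prop :=
  C ⊆ Set.Iio κ.ord ∧
  (∀ α < κ.ord, ∃ β ∈ C, α ≤ β) ∧
  (∀ α, α ≠ 0 → α < κ.ord → (∀ β < α, ∃ γ ∈ C, β < γ ∧ γ < α) → α ∈ C)

/-- `S` is a stationary subset of `κ`: it meets every club. -/
def IsStationary (κ : Cardinal.{0}) (S : Set Ordinal) : Prop :=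
  ∀ C, IsClub κ C → (S ∩ C).Nonempty

variable {L : FirstOrder.Language}

/-- `p` is a partial isomorphism between the (relational) structures `A` and `B`:
a partial injective function preserving all relations in both directions. -/
def IsPartialIso (κ : Cardinal.{0}) (A B : L.Structure (O κ)) (p : Set (O κ × O κ)) : Prop :=
  (∀ x y y', (x, y) ∈ p → (x, y') ∈ p → y = y') ∧
  (∀ x x' y, (x, y) ∈ p → (x', y) ∈ p → x = x') ∧
  ∀ (n : ℕ) (R : L.Relations n) (a b : Fin n → O κ),
    (∀ i, (a i, b i) ∈ p) →
      (@FirstOrder.Language.Structure.RelMap L (O κ) A n R a ↔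
        @FirstOrder.Language.Structure.RelMap L (O κ) B n R b)

/-- A legal move of player I in `EF^α_ω`: a subset of `α` of size `< κ`
extending the previous move. -/
def LegalI (κ : Cardinal.{0}) (α : Ordinal) (prev now : Set (O κ)) : Prop :=
  (∀ x ∈ now, (x : Ordinal) < α) ∧ Cardinal.mk ↥now < Cardinal.lift.{1} κ ∧ prev ⊆ now

/-- A legal move of player II in `EF^α_ω` responding to the move `X` of player I:
a partial function `⊆ α × α` of size `< κ` extending the previous move, whose domain and
range contain `X`. -/
def LegalII (κ : Cardinal.{0}) (α : Ordinal) (X : Set (O κ))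
    (prev now : Set (O κ × O κ)) : Prop :=
  (∀ q ∈ now, (q.1 : Ordinal) < α ∧ (q.2 : Ordinal) < α) ∧
  Cardinal.mk ↥now < Cardinal.lift.{1} κ ∧
  prev ⊆ now ∧
  (∀ x y y', (x, y) ∈ now → (x, y') ∈ now → y = y') ∧
  ∀ x ∈ X, (∃ y, (x, y) ∈ now) ∧ (∃ y, (y, x) ∈ now)

/-- Player II has a winning strategy in the game `EF^α_ω (A↾α, B↾α)`:
a strategy `σ` (a function of the sequence of moves of player I so far) such that in
every play in which player I moves legally, all of II's moves are legal and the union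
of II's moves is a partial isomorphism. -/
def IIWinsEF (κ : Cardinal.{0}) (α : Ordinal) (A B : L.Structure (O κ)) : Prop :=
  ∃ σ : List (Set (O κ)) → Set (O κ × O κ),
    ∀ x : ℕ → Set (O κ),
      (∀ n, LegalI κ α (if n = 0 then ∅ else x (n - 1)) (x n)) →
      (∀ n, LegalII κ α (x n)
          (if n = 0 then ∅ else σ ((List.range n).map x))
          (σ ((List.range (n + 1)).map x))) ∧
      IsPartialIso κ A B (⋃ n, σ ((List.range (n + 1)).map x))

/-- Player I has a winning strategy in the game `EF^α_ω (A↾α, B↾α)`: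
a strategy `τ` (a function of the sequence of moves of player II so far) whose moves are
legal as long as player II has moved legally, and such that in every play in which
player II moves legally the union of II's moves is not a partial isomorphism. -/
def IWinsEF (κ : Cardinal.{0}) (α : Ordinal) (A B : L.Structure (O κ)) : Prop :=
  ∃ τ : List (Set (O κ × O κ)) → Set (O κ),
    (∀ (y : ℕ → Set (O κ × O κ)) (n : ℕ),
      (∀ m < n, LegalII κ α (τ ((List.range m).map y))
          (if m = 0 then ∅ else y (m - 1)) (y m)) →
      LegalI κ α (if n = 0 then ∅ else τ ((List.range (n - 1)).map y))
        (τ ((List.range n).map y))) ∧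
    ∀ y : ℕ → Set (O κ × O κ),
      (∀ n, LegalII κ α (τ ((List.range n).map y))
          (if n = 0 then ∅ else y (n - 1)) (y n)) →
      ¬ IsPartialIso κ A B (⋃ n, y n)

/-!
The club can be taken to be all of `κ`: for every `α`, "II wins `EF^α_ω`" is an equivalence.
II wins `EF^α_ω (A, A)` by answering with the identity on I's move, and wins the game on `(B, A)`
by inverting her strategy for `(A, B)`. For transitivity II composes winning strategies `σ₁` for
`(A, B)` and `σ₂` for `(B, C)`, running both games on the side: each move `X` of I is played in
the second game, the domain of the answer there is added to I's move in the first game, and the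
range of the answer in the first game is played as a further move in the second game. The
composite of the two answers then has `X` in its domain and in its range, and the union of the
composites lies inside the composite of the two winning unions, a partial isomorphism. Since `κ`
is infinite, all simulated moves stay of size `< κ`.
-/

open scoped SetRel

universe u

section SetRel

def IsFunctional {β γ : Type*} (R : SetRel β γ) : Prop :=
  ∀ x y y', (x, y) ∈ R → (x, y') ∈ R → y = y'

lemma IsFunctional.comp {β γ δ : Type*} {F : SetRel β γ} {G : SetRel γ δ} (hF : IsFunctional F)
    (hG : IsFunctional G) : IsFunctional (F ○ G) := by
  rintro x y y' ⟨b, hxb, hby⟩ ⟨b', hxb', hby'⟩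
  obtain rfl := hF x b b' hxb hxb'
  exact hG b y y' hby hby'

lemma mk_comp_le {β γ δ : Type u} {F : SetRel β γ} {G : SetRel γ δ} (hG : IsFunctional G) :
    #(F ○ G : Set (β × δ)) ≤ #F := by
  choose b hb using fun q : (F ○ G : Set (β × δ)) => q.2
  refine Cardinal.mk_le_of_injective (f := fun q => ⟨(q.1.1, b q), (hb q).1⟩) ?_
  rintro ⟨⟨x, y⟩, hq⟩ ⟨⟨x', y'⟩, hq'⟩ h
  simp only [Subtype.mk.injEq, Prod.mk.injEq] at h
  obtain ⟨rfl, hbb⟩ := h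
  have := hG _ y y' (hb ⟨_, hq⟩).2 (hbb ▸ (hb ⟨_, hq'⟩).2)
  simp [this]

lemma mk_dom_le {β γ : Type u} (R : SetRel β γ) : #R.dom ≤ #R := by
  refine (Cardinal.mk_le_mk_of_subset ?_).trans (Cardinal.mk_image_le (f := Prod.fst))
  rintro a ⟨b, hab⟩
  exact ⟨(a, b), hab, rfl⟩

lemma mk_cod_le {β γ : Type u} (R : SetRel β γ) : #R.cod ≤ #R :=
  (mk_dom_le R.inv).trans_eq (Cardinal.mk_preimage_equiv (Equiv.prodComm γ β) R)

lemma subset_dom_comp {β γ δ : Type*} {F : SetRel β γ} {G : SetRel γ δ} (h : F.cod ⊆ G.dom) :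
    F.dom ⊆ (F ○ G).dom := by
  rintro a ⟨b, hab⟩
  obtain ⟨c, hbc⟩ := h ⟨a, hab⟩
  exact ⟨c, b, hab, hbc⟩

lemma subset_cod_comp {β γ δ : Type*} {F : SetRel β γ} {G : SetRel γ δ} (h : G.dom ⊆ F.cod) :
    G.cod ⊆ (F ○ G).cod := by
  rintro c ⟨b, hbc⟩
  obtain ⟨a, hab⟩ := h ⟨c, hbc⟩
  exact ⟨a, b, hab, hbc⟩

end SetRel

section PartialIso

variable {κ : Cardinal.{0}} {A B C : L.Structure (O κ)} {p q : SetRel (O κ) (O κ)}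

lemma IsPartialIso.isFunctional (h : IsPartialIso κ A B p) : IsFunctional p := h.1

lemma IsPartialIso.isFunctional_inv (h : IsPartialIso κ A B p) : IsFunctional p.inv :=
  fun y x x' hx hx' => h.2.1 x x' y hx hx'

lemma IsPartialIso.mono (h : IsPartialIso κ A B q) (hpq : p ⊆ q) : IsPartialIso κ A B p :=
  ⟨fun x y y' hy hy' => h.1 x y y' (hpq hy) (hpq hy'),
    fun x x' y hx hx' => h.2.1 x x' y (hpq hx) (hpq hx'),
    fun n R a b hab => h.2.2 n R a b fun i => hpq (hab i)⟩

lemma isPartialIso_of_subset_id (A : L.Structure (O κ)) (h : p ⊆ SetRel.id) :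
    IsPartialIso κ A A p := by
  have hdiag : ∀ {x y}, (x, y) ∈ p → x = y := fun hxy => h hxy
  refine ⟨fun x y y' hy hy' => (hdiag hy).symm.trans (hdiag hy'),
    fun x x' y hx hx' => (hdiag hx).trans (hdiag hx').symm, fun n R a b hab => ?_⟩
  rw [funext fun i => hdiag (hab i)]

lemma IsPartialIso.inv (h : IsPartialIso κ A B p) : IsPartialIso κ B A p.inv :=
  ⟨h.isFunctional_inv, fun y y' x hy hy' => h.1 x y y' hy hy',
    fun n R a b hab => (h.2.2 n R b a hab).symm⟩

lemma IsPartialIso.comp (hp : IsPartialIso κ A B p) (hq : IsPartialIso κ B C q) :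
    IsPartialIso κ A C (p ○ q) := by
  refine ⟨hp.isFunctional.comp hq.isFunctional, ?_, fun n R a c hac => ?_⟩
  · rintro x x' y ⟨b, hxb, hby⟩ ⟨b', hx'b', hb'y⟩
    obtain rfl := hq.2.1 b b' y hby hb'y
    exact hp.2.1 x x' b hxb hx'b'
  · choose b hab hbc using hac
    exact (hp.2.2 n R a b hab).trans (hq.2.2 n R b c hbc)

end PartialIso

section Moves

variable {κ : Cardinal.{0}} {α : Ordinal}

def IsSmallBelow (κ : Cardinal.{0}) (α : Ordinal) (X : Set (O κ)) : Prop :=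
  (∀ x ∈ X, (x : Ordinal) < α) ∧ #X < Cardinal.lift.{1} κ

lemma isSmallBelow_empty (hκ : κ ≠ 0) : IsSmallBelow κ α ∅ :=
  ⟨fun _ h => h.elim, by simpa [pos_iff_ne_zero] using hκ⟩

lemma IsSmallBelow.union (hκ : ℵ₀ ≤ κ) {X Y : Set (O κ)} (hX : IsSmallBelow κ α X)
    (hY : IsSmallBelow κ α Y) : IsSmallBelow κ α (X ∪ Y) := by
  refine ⟨fun x hx => hx.elim (hX.1 x) (hY.1 x), (Cardinal.mk_union_le X Y).trans_lt ?_⟩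
  exact Cardinal.add_lt_of_lt (by simpa using hκ) hX.2 hY.2

lemma LegalI.isSmallBelow {X Y : Set (O κ)} (h : LegalI κ α X Y) : IsSmallBelow κ α Y :=
  ⟨h.1, h.2.1⟩

lemma legalI_of_monotone {x : ℕ → Set (O κ)} (hx : Monotone x)
    (hsmall : ∀ n, IsSmallBelow κ α (x n)) (n : ℕ) :
    LegalI κ α (if n = 0 then ∅ else x (n - 1)) (x n) := by
  refine ⟨(hsmall n).1, (hsmall n).2, ?_⟩
  split_ifs
  exacts [Set.empty_subset _, hx (Nat.sub_le n 1)]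

variable {X : Set (O κ)} {P F : SetRel (O κ) (O κ)}

lemma LegalII.isSmallBelow_dom (h : LegalII κ α X P F) : IsSmallBelow κ α F.dom :=
  ⟨fun _ ⟨_, hq⟩ => (h.1 _ hq).1, (mk_dom_le F).trans_lt h.2.1⟩

lemma LegalII.isSmallBelow_cod (h : LegalII κ α X P F) : IsSmallBelow κ α F.cod :=
  ⟨fun _ ⟨_, hq⟩ => (h.1 _ hq).2, (mk_cod_le F).trans_lt h.2.1⟩

lemma LegalII.subset_cod (h : LegalII κ α X P F) : X ⊆ F.cod := fun x hx => (h.2.2.2.2 x hx).2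

lemma LegalII.subset_dom (h : LegalII κ α X P F) : X ⊆ F.dom := fun x hx => (h.2.2.2.2 x hx).1

lemma LegalII.inv (h : LegalII κ α X P F) (hinj : IsFunctional F.inv) :
    LegalII κ α X P.inv F.inv :=
  ⟨fun _ hq => (h.1 _ hq).symm, (Cardinal.mk_preimage_equiv (Equiv.prodComm _ _) F).trans_lt h.2.1,
    SetRel.inv_mono h.2.2.1, hinj, fun x hx => (h.2.2.2.2 x hx).symm⟩

lemma LegalII.comp {X₁ X₂ : Set (O κ)} {P₁ P₂ G : SetRel (O κ) (O κ)}
    (hF : LegalII κ α X₁ P₁ F) (hG : LegalII κ α X₂ P₂ G) (hP : P ⊆ F ○ G)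
    (hX : X ⊆ (F ○ G).dom ∩ (F ○ G).cod) : LegalII κ α X P (F ○ G) :=
  ⟨fun _ ⟨_, hab, hbc⟩ => ⟨(hF.1 _ hab).1, (hG.1 _ hbc).2⟩, (mk_comp_le hG.2.2.2.1).trans_lt hF.2.1,
    hP, IsFunctional.comp hF.2.2.2.1 hG.2.2.2.1, hX⟩

end Moves

section Strategies

variable {κ : Cardinal.{0}} {α : Ordinal}

def IsWinningII (κ : Cardinal.{0}) (α : Ordinal) (A B : L.Structure (O κ))
    (σ : List (Set (O κ)) → SetRel (O κ) (O κ)) : Prop :=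
  ∀ x : ℕ → Set (O κ),
    (∀ n, LegalI κ α (if n = 0 then ∅ else x (n - 1)) (x n)) →
    (∀ n, LegalII κ α (x n)
        (if n = 0 then ∅ else σ ((List.range n).map x))
        (σ ((List.range (n + 1)).map x))) ∧
    IsPartialIso κ A B (⋃ n, σ ((List.range (n + 1)).map x))

lemma getLastD_map_range {β : Type*} (x : ℕ → β) (d : β) (n : ℕ) :
    ((List.range n).map x).getLastD d = if n = 0 then d else x (n - 1) := by
  cases n <;> simp [List.range_succ]

/-- II's answer to a legal position is legal, whatever I plays afterwards: play on against the
sequence that stops at that position. -/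
lemma IsWinningII.legalII_of_le {A B : L.Structure (O κ)}
    {σ : List (Set (O κ)) → SetRel (O κ) (O κ)} (hσ : IsWinningII κ α A B σ)
    {x : ℕ → Set (O κ)} (hx : Monotone x) {n : ℕ} (hsmall : ∀ k ≤ n, IsSmallBelow κ α (x k)) :
    LegalII κ α (x n) (if n = 0 then ∅ else σ ((List.range n).map x))
      (σ ((List.range (n + 1)).map x)) := by
  have hstop : Monotone fun k => x (min k n) := hx.comp fun _ _ h => min_le_min_right n h
  have hprefix : ∀ k ≤ n + 1, (List.range k).map (fun k => x (min k n)) = (List.range k).map x :=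
    fun k hk => List.map_congr_left fun j hj => by
      rw [min_eq_left (by have := List.mem_range.mp hj; omega)]
  have := (hσ _ (legalI_of_monotone hstop fun k => hsmall _ (min_le_right k n))).1 n
  rwa [hprefix n n.le_succ, hprefix (n + 1) le_rfl, min_self] at this

lemma monotone_of_legalII {σ : List (Set (O κ)) → SetRel (O κ) (O κ)} {x : ℕ → Set (O κ)}
    (h : ∀ n, LegalII κ α (x n) (if n = 0 then ∅ else σ ((List.range n).map x))
      (σ ((List.range (n + 1)).map x))) :
    Monotone fun n => σ ((List.range (n + 1)).map x) :=
  monotone_nat_of_le_succ fun n => by simpa using (h (n + 1)).2.2.1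

end Strategies

section ReflSymm

variable {κ : Cardinal.{0}} {α : Ordinal}

lemma legalII_diag {X Y : Set (O κ)} (h : LegalI κ α X Y) :
    LegalII κ α Y ((fun a => (a, a)) '' X) ((fun a => (a, a)) '' Y) := by
  refine ⟨?_, Cardinal.mk_image_le.trans_lt h.2.1, Set.image_mono h.2.2, ?_, ?_⟩
  · rintro _ ⟨a, ha, rfl⟩
    exact ⟨h.1 a ha, h.1 a ha⟩
  · rintro x y y' ⟨a, -, ha⟩ ⟨a', -, ha'⟩
    simp only [Prod.mk.injEq] at ha ha'
    rw [← ha.2, ← ha'.2, ha.1, ha'.1]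
  · exact fun a ha => ⟨⟨a, a, ha, rfl⟩, ⟨a, a, ha, rfl⟩⟩

lemma IIWinsEF_refl (A : L.Structure (O κ)) : IIWinsEF κ α A A := by
  refine ⟨fun l => (fun a => (a, a)) '' l.getLastD ∅, fun x hx => ⟨fun n => ?_, ?_⟩⟩
  · have := legalII_diag (hx n)
    simp only [getLastD_map_range, Nat.add_one_ne_zero, if_false, Nat.add_sub_cancel]
    split_ifs at this ⊢ <;> simpa using this
  · refine isPartialIso_of_subset_id A (Set.iUnion_subset fun n => ?_)
    rintro _ ⟨a, -, rfl⟩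
    rfl

lemma IIWinsEF_symm {A B : L.Structure (O κ)} (h : IIWinsEF κ α A B) : IIWinsEF κ α B A := by
  obtain ⟨σ, hσ⟩ := h
  refine ⟨fun l => SetRel.inv (σ l), fun x hx => ?_⟩
  obtain ⟨hlegal, hiso⟩ := hσ x hx
  refine ⟨fun n => ?_, hiso.inv.mono (Set.iUnion_subset fun n => SetRel.inv_mono ?_)⟩
  · have := (hlegal n).inv (hiso.mono (Set.subset_iUnion _ n)).isFunctional_inv
    split_ifs at this ⊢
    exacts [this, this]
  · exact Set.subset_iUnion (fun n => σ ((List.range (n + 1)).map x)) n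

end ReflSymm

section Composition

variable {κ : Cardinal.{0}} (σ₁ σ₂ : List (Set (O κ)) → SetRel (O κ) (O κ))

/-- One round of the composed game: I's new move `X` is passed to the second game, II's answer
there to the first game, and II's answer in the first game back to the second game. The two
lists record I's moves in the first and in the second game. -/
def simStep (s : List (Set (O κ)) × List (Set (O κ))) (X : Set (O κ)) :
    List (Set (O κ)) × List (Set (O κ)) :=
  let Y := s.2.getLastD ∅ ∪ X
  let U := s.1.getLastD ∅ ∪ X ∪ (σ₂ (s.2 ++ [Y])).dom
  (s.1 ++ [U], s.2 ++ [Y, Y ∪ (σ₁ (s.1 ++ [U])).cod])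

def simulate (l : List (Set (O κ))) : List (Set (O κ)) × List (Set (O κ)) :=
  l.foldl (simStep σ₁ σ₂) ([], [])

def compStrategy (l : List (Set (O κ))) : SetRel (O κ) (O κ) :=
  σ₁ (simulate σ₁ σ₂ l).1 ○ σ₂ (simulate σ₁ σ₂ l).2

variable (x : ℕ → Set (O κ))

def moves₁ (n : ℕ) : Set (O κ) :=
  (simulate σ₁ σ₂ ((List.range (n + 1)).map x)).1.getD n ∅

/-- Round `n` of the composed game makes I's moves `moves₂ (2 n)` and `moves₂ (2 n + 1)` in the
second game. -/
def moves₂ (m : ℕ) : Set (O κ) :=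
  (simulate σ₁ σ₂ ((List.range (m / 2 + 1)).map x)).2.getD m ∅

lemma simulate_range_succ (n : ℕ) :
    simulate σ₁ σ₂ ((List.range (n + 1)).map x)
      = simStep σ₁ σ₂ (simulate σ₁ σ₂ ((List.range n).map x)) (x n) := by
  simp [simulate, List.range_succ]

lemma simulate_range (n : ℕ) :
    simulate σ₁ σ₂ ((List.range n).map x)
      = ((List.range n).map (moves₁ σ₁ σ₂ x), (List.range (2 * n)).map (moves₂ σ₁ σ₂ x)) := by
  induction n with
  | zero => rfl
  | succ n ih =>
    obtain ⟨a, b, c, hstep⟩ : ∃ a b c, simulate σ₁ σ₂ ((List.range (n + 1)).map x)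
        = ((List.range n).map (moves₁ σ₁ σ₂ x) ++ [a],
          (List.range (2 * n)).map (moves₂ σ₁ σ₂ x) ++ [b, c]) := by
      rw [simulate_range_succ, ih]
      exact ⟨_, _, _, rfl⟩
    have ha : moves₁ σ₁ σ₂ x n = a := by
      rw [moves₁, hstep]
      simp
    have hb : moves₂ σ₁ σ₂ x (2 * n) = b := by
      rw [moves₂, show 2 * n / 2 = n by omega, hstep]
      simp
    have hc : moves₂ σ₁ σ₂ x (2 * n + 1) = c := by
      rw [moves₂, show (2 * n + 1) / 2 = n by omega, hstep]
      simp [List.getD_eq_getElem?_getD]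
    rw [hstep, show 2 * (n + 1) = 2 * n + 1 + 1 by ring, List.range_succ, List.range_succ,
      List.range_succ]
    simp [ha, hb, hc]

lemma moves_range_succ (n : ℕ) :
    ((List.range (n + 1)).map (moves₁ σ₁ σ₂ x), (List.range (2 * n + 2)).map (moves₂ σ₁ σ₂ x))
      = simStep σ₁ σ₂
          ((List.range n).map (moves₁ σ₁ σ₂ x), (List.range (2 * n)).map (moves₂ σ₁ σ₂ x))
          (x n) := by
  rw [← simulate_range, ← simulate_range_succ, simulate_range]
  rfl

lemma moves_recursion (n : ℕ) :
    moves₁ σ₁ σ₂ x n = (if n = 0 then ∅ else moves₁ σ₁ σ₂ x (n - 1)) ∪ x n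
      ∪ (σ₂ ((List.range (2 * n + 1)).map (moves₂ σ₁ σ₂ x))).dom ∧
    moves₂ σ₁ σ₂ x (2 * n) = (if n = 0 then ∅ else moves₂ σ₁ σ₂ x (2 * n - 1)) ∪ x n ∧
    moves₂ σ₁ σ₂ x (2 * n + 1)
      = moves₂ σ₁ σ₂ x (2 * n) ∪ (σ₁ ((List.range (n + 1)).map (moves₁ σ₁ σ₂ x))).cod := by
  have h := moves_range_succ σ₁ σ₂ x n
  rw [show 2 * n + 2 = 2 * n + 1 + 1 by ring, List.range_succ, List.range_succ,
    List.range_succ] at h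
  simp only [List.map_append, List.map_cons, List.map_nil, List.append_assoc, List.singleton_append,
    simStep, Prod.mk.injEq, List.append_cancel_left_eq, List.cons.injEq, and_true,
    getLastD_map_range, Nat.mul_eq_zero, OfNat.ofNat_ne_zero, false_or] at h
  obtain ⟨h₁, h₂, h₃⟩ := h
  rw [← h₂] at h₁ h₃
  rw [← h₁] at h₃
  simp only [List.range_succ, List.map_append, List.map_cons, List.map_nil]
  exact ⟨h₁, h₂, h₃⟩

lemma compStrategy_range_succ (n : ℕ) :
    compStrategy σ₁ σ₂ ((List.range (n + 1)).map x)
      = σ₁ ((List.range (n + 1)).map (moves₁ σ₁ σ₂ x))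
          ○ σ₂ ((List.range (2 * n + 2)).map (moves₂ σ₁ σ₂ x)) := by
  rw [compStrategy, simulate_range]
  rfl

lemma monotone_moves₁ : Monotone (moves₁ σ₁ σ₂ x) :=
  monotone_nat_of_le_succ fun n => by
    rw [(moves_recursion σ₁ σ₂ x (n + 1)).1, if_neg n.succ_ne_zero, Nat.add_sub_cancel]
    exact Set.subset_union_left.trans Set.subset_union_left

lemma monotone_moves₂ : Monotone (moves₂ σ₁ σ₂ x) :=
  monotone_nat_of_le_succ fun m => by
    obtain ⟨n, rfl | rfl⟩ := Nat.even_or_odd' m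
    · rw [(moves_recursion σ₁ σ₂ x n).2.2]
      exact Set.subset_union_left
    · rw [show 2 * n + 1 + 1 = 2 * (n + 1) by ring, (moves_recursion σ₁ σ₂ x (n + 1)).2.1,
        if_neg n.succ_ne_zero, show 2 * (n + 1) - 1 = 2 * n + 1 by omega]
      exact Set.subset_union_left

variable {σ₁ σ₂ x} {α : Ordinal} {A B C : L.Structure (O κ)}

lemma isSmallBelow_moves (hκ : ℵ₀ ≤ κ) (hσ₁ : IsWinningII κ α A B σ₁)
    (hσ₂ : IsWinningII κ α B C σ₂) (hx : ∀ n, IsSmallBelow κ α (x n)) (n : ℕ) :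
    (∀ k < n, IsSmallBelow κ α (moves₁ σ₁ σ₂ x k)) ∧
      ∀ m < 2 * n, IsSmallBelow κ α (moves₂ σ₁ σ₂ x m) := by
  have hκ₀ : κ ≠ 0 := (aleph0_pos.trans_le hκ).ne'
  induction n with
  | zero => simp
  | succ n ih =>
    obtain ⟨hu, hv⟩ := ih
    have hv₀ : IsSmallBelow κ α (moves₂ σ₁ σ₂ x (2 * n)) := by
      rw [(moves_recursion σ₁ σ₂ x n).2.1]
      refine IsSmallBelow.union hκ ?_ (hx n)
      split_ifs
      exacts [isSmallBelow_empty hκ₀, hv _ (by omega)]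
    have hu₀ : IsSmallBelow κ α (moves₁ σ₁ σ₂ x n) := by
      rw [(moves_recursion σ₁ σ₂ x n).1]
      refine ((IsSmallBelow.union hκ ?_ (hx n)).union hκ
        (hσ₂.legalII_of_le (monotone_moves₂ σ₁ σ₂ x) fun m hm => ?_).isSmallBelow_dom)
      · split_ifs
        exacts [isSmallBelow_empty hκ₀, hu _ (by omega)]
      · rcases hm.lt_or_eq with hm | rfl
        exacts [hv m hm, hv₀]
    have hv₁ : IsSmallBelow κ α (moves₂ σ₁ σ₂ x (2 * n + 1)) := by
      rw [(moves_recursion σ₁ σ₂ x n).2.2]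
      refine hv₀.union hκ
        (hσ₁.legalII_of_le (monotone_moves₁ σ₁ σ₂ x) fun k hk => ?_).isSmallBelow_cod
      rcases hk.lt_or_eq with hk | rfl
      exacts [hu k hk, hu₀]
    refine ⟨fun k hk => ?_, fun m hm => ?_⟩
    · rcases Nat.lt_succ_iff_lt_or_eq.mp hk with hk | rfl
      exacts [hu k hk, hu₀]
    · rcases (by omega : m < 2 * n ∨ m = 2 * n ∨ m = 2 * n + 1) with hm | rfl | rfl
      exacts [hv m hm, hv₀, hv₁]

/-- The images of `x n` under II's answer in the first game were played in the second game as part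
of `moves₂ (2 n + 1)`, and its preimages in the second game in the first game as part of
`moves₁ n`. -/
lemma subset_dom_inter_cod_compStrategy {P₁ P₂ P₃ : SetRel (O κ) (O κ)} (n : ℕ)
    (hF : LegalII κ α (moves₁ σ₁ σ₂ x n) P₁ (σ₁ ((List.range (n + 1)).map (moves₁ σ₁ σ₂ x))))
    (hG₀ : LegalII κ α (moves₂ σ₁ σ₂ x (2 * n)) P₂
      (σ₂ ((List.range (2 * n + 1)).map (moves₂ σ₁ σ₂ x))))
    (hG : LegalII κ α (moves₂ σ₁ σ₂ x (2 * n + 1)) P₃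
      (σ₂ ((List.range (2 * n + 2)).map (moves₂ σ₁ σ₂ x))))
    (hG₀G : σ₂ ((List.range (2 * n + 1)).map (moves₂ σ₁ σ₂ x))
      ⊆ σ₂ ((List.range (2 * n + 2)).map (moves₂ σ₁ σ₂ x))) :
    x n ⊆ (compStrategy σ₁ σ₂ ((List.range (n + 1)).map x)).dom
      ∩ (compStrategy σ₁ σ₂ ((List.range (n + 1)).map x)).cod := by
  obtain ⟨hu, hv₀, hv₁⟩ := moves_recursion σ₁ σ₂ x n
  have hxu : x n ⊆ moves₁ σ₁ σ₂ x n := hu ▸ Set.subset_union_right.trans Set.subset_union_left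
  have hxv : x n ⊆ moves₂ σ₁ σ₂ x (2 * n) := hv₀ ▸ Set.subset_union_right
  have hFG := (hv₁ ▸ Set.subset_union_right).trans hG.subset_dom
  have hG₀F := (hu ▸ Set.subset_union_right).trans hF.subset_cod
  rw [compStrategy_range_succ]
  refine Set.subset_inter (hxu.trans (hF.subset_dom.trans (subset_dom_comp hFG))) ?_
  exact hxv.trans (hG₀.subset_cod.trans ((subset_cod_comp hG₀F).trans
    (SetRel.cod_mono (SetRel.comp_subset_comp_right hG₀G))))

end Composition

section Trans

variable {κ : Cardinal.{0}} {α : Ordinal}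

lemma IIWinsEF_trans (hκ : ℵ₀ ≤ κ) {A B C : L.Structure (O κ)} (h₁ : IIWinsEF κ α A B)
    (h₂ : IIWinsEF κ α B C) : IIWinsEF κ α A C := by
  obtain ⟨σ₁, hσ₁⟩ := h₁
  obtain ⟨σ₂, hσ₂⟩ := h₂
  refine ⟨compStrategy σ₁ σ₂, fun x hx => ?_⟩
  have hsmall := isSmallBelow_moves hκ hσ₁ hσ₂ fun n => (hx n).isSmallBelow
  obtain ⟨hF, hFiso⟩ := hσ₁ _ (legalI_of_monotone (monotone_moves₁ σ₁ σ₂ x)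
    fun n => (hsmall (n + 1)).1 n n.lt_succ_self)
  obtain ⟨hG, hGiso⟩ := hσ₂ _ (legalI_of_monotone (monotone_moves₂ σ₁ σ₂ x)
    fun m => (hsmall (m + 1)).2 m (by omega))
  have hFmono := monotone_of_legalII hF
  have hGmono := monotone_of_legalII hG
  refine ⟨fun n => ?_, ?_⟩
  · have hX := subset_dom_inter_cod_compStrategy n (hF n) (hG (2 * n)) (hG (2 * n + 1))
      (hGmono (2 * n).le_succ)
    rw [compStrategy_range_succ] at hX ⊢
    refine (hF n).comp (hG (2 * n + 1)) ?_ hX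
    rcases n with _ | n
    · exact Set.empty_subset _
    · rw [if_neg n.succ_ne_zero, compStrategy_range_succ]
      exact SetRel.comp_subset_comp (hFmono n.le_succ) (hGmono (by omega))
  · simp only [compStrategy_range_succ]
    exact (hFiso.comp hGiso).mono (Set.iUnion_subset fun n =>
      SetRel.comp_subset_comp (Set.subset_iUnion (fun m => σ₁ ((List.range (m + 1)).map _)) n)
        (Set.subset_iUnion (fun m => σ₂ ((List.range (m + 1)).map _)) (2 * n + 1)))

end Trans

lemma isClub_Iio_ord (κ : Cardinal.{0}) : IsClub κ (Iio κ.ord) :=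
  ⟨subset_rfl, fun α hα => ⟨α, hα, le_rfl⟩, fun _ _ hα _ => hα⟩

theorem EF_equivalence_club_general (κ : Cardinal.{0}) (hκ₁ : ℵ₀ < κ)
    (L : FirstOrder.Language) :
    ∃ C, IsClub κ C ∧ ∀ α ∈ C,
      Equivalence (fun A B : L.Structure (O κ) => IIWinsEF κ α A B) :=
  ⟨Iio κ.ord, isClub_Iio_ord κ, fun _ _ => ⟨IIWinsEF_refl, IIWinsEF_symm, IIWinsEF_trans hκ₁.le⟩⟩

/-- Lemma 2.7 of [HM15]. There is a club `C_EF ⊆ κ` such that for every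
`α ∈ C_EF` the relation "player II has a winning strategy in `EF^α_ω (A↾α, B↾α)`" is an
equivalence relation on structures with domain `κ` in a countable relational vocabulary. -/
theorem EF_equivalence_club (κ : Cardinal.{0}) (hκ₁ : ℵ₀ < κ) (hκ₂ : κ ^< κ = κ)
    (L : FirstOrder.Language) [L.IsRelational] [Countable (Σ n, L.Relations n)] :
    ∃ C, IsClub κ C ∧ ∀ α ∈ C,
      Equivalence (fun A B : L.Structure (O κ) => IIWinsEF κ α A B) :=
  EF_equivalence_club_general κ hκ₁ L

end GenCantor
end
end

section
/- Let κ be an uncountable cardinal with κ^{<κ} = κ. If f : 2^κ → 2^κ is a Borel function and B ⊆ 2^κ is a Borel* set, then f⁻¹[B] is a Borel* set. -/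
noncomputable section

open Cardinal Set

namespace GenCantor

/-- The basic open set `[ζ]` determined by the restriction of `ζ` to the ordinals below `β`. -/
def basicOpen (κ : Cardinal.{0}) (β : Ordinal) (ζ : O κ → Bool) : Set (Point κ) :=
  {η | ∀ γ : O κ, (γ : Ordinal) < β → η γ = ζ γ}

/-- The collection of basic open subsets of `2^κ`. -/
def basicOpens (κ : Cardinal.{0}) : Set (Set (Point κ)) :=
  {s | ∃ β < κ.ord, ∃ ζ, s = basicOpen κ β ζ}

/-- The bounded topology on `2^κ`, generated by the basic open sets. -/
def boundedTopology (κ : Cardinal.{0}) : TopologicalSpace (Point κ) :=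
  TopologicalSpace.generateFrom (basicOpens κ)

/-- Partial sequences of elements of `κ`: a node of the tree `κ^{<κ}` is represented by a
function `Ordinal → Option (O κ)` whose support is an initial segment `Iio β`, `β < κ`. -/
abbrev PreSeq (κ : Cardinal.{0}) : Type 1 := Ordinal → Option (O κ)

/-- `f` represents a sequence of ordinals `< κ` of length `< κ`. -/
def IsSeq (κ : Cardinal.{0}) (f : PreSeq κ) : Prop :=
  ∃ β < κ.ord, ∀ γ, (f γ).isSome ↔ γ < β

/-- The (initial segment) tree order on sequences. -/
def seqLE {κ : Cardinal.{0}} (f g : PreSeq κ) : Prop :=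
  ∀ γ x, f γ = some x → g γ = some x

/-- The empty sequence, the root of a tree of sequences. -/
def seqRoot (κ : Cardinal.{0}) : PreSeq κ := fun _ => none

/-- The supremum (union) of a chain of sequences. -/
def seqSup {κ : Cardinal.{0}} (c : Set (PreSeq κ)) : PreSeq κ :=
  fun γ => open scoped Classical in
    if h : ∃ x, ∃ f ∈ c, f γ = some x then some h.choose else none


/-- `g` is an immediate successor of `f` in the tree `T`. -/
def ImmSucc {κ : Cardinal.{0}} (T : Set (PreSeq κ)) (f g : PreSeq κ) : Prop :=
  g ∈ T ∧ seqLE f g ∧ f ≠ g ∧ ∀ h ∈ T, seqLE f h → seqLE h g → h = f ∨ h = g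

/-- `f` is a leaf of the tree `T`. -/
def IsLeaf {κ : Cardinal.{0}} (T : Set (PreSeq κ)) (f : PreSeq κ) : Prop :=
  f ∈ T ∧ ∀ g ∈ T, seqLE f g → g = f

/-- Labels for the nodes of a `Borel*`-code over the space `Z`: every non-leaf node is
labelled `∩` or `∪`, and every leaf is labelled by a subset of `Z`. -/
inductive BLabel (Z : Type*) : Type _ where
  | inter : BLabel Z
  | union : BLabel Z
  | leaf : Set Z → BLabel Z

/-- A `Borel*`-code over the space `Z` whose leaf labels are members of the family
`Basic` of subsets of `Z` (for genuine `Borel*`-codes, `Basic` is the family of basic open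
sets): a closed `κ⁺,κ`-tree, presented as a downward closed subtree of `κ^{<κ}` of
cardinality `≤ κ` with no chains of length `κ` in which every chain has a (unique)
supremum, together with a labelling `h` of its nodes. -/
structure BorelStarCode (κ : Cardinal.{0}) (Z : Type*) (Basic : Set (Set Z)) where
  T : Set (PreSeq κ)
  h : PreSeq κ → BLabel Z
  mem_isSeq : ∀ f ∈ T, IsSeq κ f
  root_mem : seqRoot κ ∈ T
  downward : ∀ f ∈ T, ∀ g, IsSeq κ g → seqLE g f → g ∈ T
  card_le : Cardinal.mk ↥T ≤ Cardinal.lift.{1} κ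
  no_long_chain : ∀ c ⊆ T, IsChain seqLE c → Cardinal.mk ↥c < Cardinal.lift.{1} κ
  chain_sup : ∀ c ⊆ T, c.Nonempty → IsChain seqLE c → seqSup c ∈ T
  label_leaf : ∀ f ∈ T, IsLeaf T f → ∃ s ∈ Basic, h f = BLabel.leaf s
  label_node : ∀ f ∈ T, ¬ IsLeaf T f → h f = BLabel.inter ∨ h f = BLabel.union

/-- The positions of the game `B*(T, h, x)` that can be reached when player II plays
according to the strategy `σ`: the game starts at the root; at a node labelled `∩`
player I chooses an immediate successor, at a node labelled `∪` player II moves according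
to `σ`, and at a limit the game continues from the supremum of the previous moves. -/
inductive Reach {κ : Cardinal.{0}} {Z : Type*} {Basic : Set (Set Z)}
    (code : BorelStarCode κ Z Basic) (σ : PreSeq κ → PreSeq κ) : PreSeq κ → Prop where
  | root : Reach code σ (seqRoot κ)
  | inter (f g : PreSeq κ) : Reach code σ f → code.h f = BLabel.inter →
      ImmSucc code.T f g → Reach code σ g
  | union (f : PreSeq κ) : Reach code σ f → code.h f = BLabel.union →
      Reach code σ (σ f)
  | lim (c : Set (PreSeq κ)) : c.Nonempty → IsChain seqLE c →
      (∀ f ∈ c, Reach code σ f) → Reach code σ (seqSup c)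

/-- Player II has a winning strategy in the game `B*(T, h, x)`: a strategy `σ` which
always chooses an immediate successor at reachable `∪`-nodes, and such that `x` belongs to
the label of every reachable leaf. -/
def IIWinsBStar {κ : Cardinal.{0}} {Z : Type*} {Basic : Set (Set Z)}
    (code : BorelStarCode κ Z Basic) (x : Z) : Prop :=
  ∃ σ : PreSeq κ → PreSeq κ,
    (∀ f, Reach code σ f → code.h f = BLabel.union → ImmSucc code.T f (σ f)) ∧
    (∀ f s, Reach code σ f → code.h f = BLabel.leaf s → x ∈ s)

/-- `B` is a `Borel*` subset of `Z` (with respect to the family `Basic` of basic open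
subsets of `Z`): there is a `Borel*`-code such that `B` is the set of points for which
player II has a winning strategy in the associated game. -/
def IsBorelStar (κ : Cardinal.{0}) {Z : Type*} (Basic : Set (Set Z)) (B : Set Z) : Prop :=
  ∃ code : BorelStarCode κ Z Basic, B = {x | IIWinsBStar code x}


/-- The `κ`-Borel subsets of `2^κ`: the smallest collection of sets containing the basic
open sets and closed under unions and intersections of length (at most) `κ`. -/
inductive IsKBorel (κ : Cardinal.{0}) : Set (Point κ) → Prop where
  | basic : ∀ s ∈ basicOpens κ, IsKBorel κ s
  | iUnion (ι : Type) (hι : Cardinal.mk ι ≤ κ) (f : ι → Set (Point κ)) :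
      (∀ i, IsKBorel κ (f i)) → IsKBorel κ (⋃ i, f i)
  | iInter (ι : Type) (hι : Cardinal.mk ι ≤ κ) (f : ι → Set (Point κ)) :
      (∀ i, IsKBorel κ (f i)) → IsKBorel κ (⋂ i, f i)

/-- `f : 2^κ → 2^κ` is a Borel function: the preimage of every open set (in the bounded
topology) is `κ`-Borel. -/
def IsBorelFun (κ : Cardinal.{0}) (f : Point κ → Point κ) : Prop :=
  ∀ A : Set (Point κ), (boundedTopology κ).IsOpen A → IsKBorel κ (f ⁻¹' A)

/-! Relabelling each leaf `s` of a code of `B` by `f⁻¹[s]` gives a code of `f⁻¹[B]` whose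
labels are `κ`-Borel rather than basic. So everything reduces to grafting: if every leaf label
of a code is `Borel*`, put a code of the label on top of that leaf. For infinite `κ` the grafted
tree is again a closed `κ⁺,κ`-tree of size `κ`, and player II wins the grafted game iff she
wins the original one: her strategies there are a strategy for the lower code together with
strategies for the codes grafted on the leaves she can reach. Grafting also shows that
`κ`-Borel sets are `Borel*`, a union or intersection of at most `κ` sets being coded by a
one-level fan whose leaves carry those sets. -/

section

variable {κ : Cardinal.{0}}

section Sequences

lemma seqLE_refl (f : PreSeq κ) : seqLE f f := fun _ _ h => h

instance : Std.Refl (seqLE (κ := κ)) := ⟨seqLE_refl⟩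

lemma seqLE_trans {f g h : PreSeq κ} (h₁ : seqLE f g) (h₂ : seqLE g h) : seqLE f h :=
  fun γ x hx => h₂ γ x (h₁ γ x hx)

lemma seqLE_antisymm {f g : PreSeq κ} (h₁ : seqLE f g) (h₂ : seqLE g f) : f = g := by
  funext γ
  cases hf : f γ with
  | some x => exact (h₁ γ x hf).symm
  | none =>
    cases hg : g γ with
    | some y => exact hf.symm.trans (h₂ γ y hg)
    | none => rfl

lemma seqRoot_le (f : PreSeq κ) : seqLE (seqRoot κ) f := by
  intro γ x h
  simp [seqRoot] at h

lemma eq_seqRoot_of_le {f : PreSeq κ} (h : seqLE f (seqRoot κ)) : f = seqRoot κ :=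
  seqLE_antisymm h (seqRoot_le f)

lemma isSeq_seqRoot (hκ : κ ≠ 0) : IsSeq κ (seqRoot κ) :=
  ⟨0, Cardinal.ord_pos.2 (pos_iff_ne_zero.2 hκ), fun γ => by simp [seqRoot]⟩

def seqLength (f : PreSeq κ) : Ordinal := sInf {γ | f γ = none}

lemma seqLength_eq {f : PreSeq κ} {β : Ordinal} (h : ∀ γ, (f γ).isSome ↔ γ < β) :
    seqLength f = β := by
  have hsupp : {γ | f γ = none} = Ici β := by
    ext γ
    simp [← Option.not_isSome_iff_eq_none, h]
  rw [seqLength, hsupp, csInf_Ici]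

namespace IsSeq

variable {f g h : PreSeq κ}

lemma isSome_iff (hf : IsSeq κ f) (γ : Ordinal) : (f γ).isSome ↔ γ < seqLength f := by
  obtain ⟨β, -, hβ⟩ := hf
  rw [seqLength_eq hβ, hβ]

lemma seqLength_lt (hf : IsSeq κ f) : seqLength f < κ.ord := by
  obtain ⟨β, hβκ, hβ⟩ := hf
  rwa [seqLength_eq hβ]

lemma le_of_seqLength_le (hf : IsSeq κ f) (hg : IsSeq κ g) (hfg : seqLength f ≤ seqLength g)
    (hfh : seqLE f h) (hgh : seqLE g h) : seqLE f g := by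
  intro γ x hx
  have hγ : γ < seqLength g := hfg.trans_lt' ((hf.isSome_iff γ).1 (by simp [hx]))
  obtain ⟨y, hy⟩ := Option.isSome_iff_exists.1 ((hg.isSome_iff γ).2 hγ)
  rw [hy, ← hgh γ y hy, hfh γ x hx]

lemma le_or_le (hf : IsSeq κ f) (hg : IsSeq κ g) (hfh : seqLE f h) (hgh : seqLE g h) :
    seqLE f g ∨ seqLE g f :=
  (le_total (seqLength f) (seqLength g)).imp (hf.le_of_seqLength_le hg · hfh hgh)
    (hg.le_of_seqLength_le hf · hgh hfh)

end IsSeq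

section Sup

variable {c : Set (PreSeq κ)}

lemma seqSup_eq_some (hc : IsChain seqLE c) {γ : Ordinal} {x : O κ} :
    seqSup c γ = some x ↔ ∃ f ∈ c, f γ = some x := by
  classical
  have hval : ∀ {f g}, f ∈ c → g ∈ c →
      ∀ {y z}, f γ = some y → g γ = some z → y = z := by
    intro f g hf hg y z hy hz
    rcases hc.total hf hg with hfg | hgf
    · exact Option.some_inj.1 ((hfg γ y hy).symm.trans hz)
    · exact Option.some_inj.1 (hy.symm.trans (hgf γ z hz))
  constructor
  · intro hsup
    unfold seqSup at hsup
    split_ifs at hsup with hex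
    obtain ⟨f, hf, hfx⟩ := hex.choose_spec
    exact ⟨f, hf, hfx.trans (congrArg some (Option.some_inj.1 hsup))⟩
  · rintro ⟨f, hf, hfx⟩
    have hex : ∃ x, ∃ f ∈ c, f γ = some x := ⟨x, f, hf, hfx⟩
    obtain ⟨g, hg, hgx⟩ := hex.choose_spec
    simp only [seqSup, dif_pos hex, hval hg hf hgx hfx]

lemma le_seqSup (hc : IsChain seqLE c) {f : PreSeq κ} (hf : f ∈ c) : seqLE f (seqSup c) :=
  fun _ _ hx => (seqSup_eq_some hc).2 ⟨f, hf, hx⟩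

lemma seqSup_le (hc : IsChain seqLE c) {g : PreSeq κ} (hg : ∀ f ∈ c, seqLE f g) :
    seqLE (seqSup c) g := by
  intro γ x hx
  obtain ⟨f, hf, hfx⟩ := (seqSup_eq_some hc).1 hx
  exact hg f hf γ x hfx

lemma seqSup_eq_of_isGreatest (hc : IsChain seqLE c) {m : PreSeq κ} (hm : m ∈ c)
    (hmax : ∀ f ∈ c, seqLE f m) : seqSup c = m :=
  seqLE_antisymm (seqSup_le hc hmax) (le_seqSup hc hm)

lemma seqSup_singleton (f : PreSeq κ) : seqSup {f} = f :=
  seqSup_eq_of_isGreatest Set.subsingleton_singleton.isChain rfl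
    (fun _ hg => hg ▸ seqLE_refl f)

lemma seqSup_eq_of_cofinal (hc : IsChain seqLE c) {U : Set (PreSeq κ)} (hU : U ⊆ c)
    (hcof : ∀ f ∈ c, ∃ g ∈ U, seqLE f g) : seqSup c = seqSup U := by
  have hcU : IsChain seqLE U := hc.mono hU
  refine seqLE_antisymm (seqSup_le hc fun f hf => ?_) (seqSup_le hcU fun f hf => ?_)
  · obtain ⟨g, hg, hfg⟩ := hcof f hf
    exact seqLE_trans hfg (le_seqSup hcU hg)
  · exact le_seqSup hc (hU hf)

lemma seqSup_mem_of_subset_pair {a b : PreSeq κ} (hab : seqLE a b) {c : Set (PreSeq κ)}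
    (hc : c ⊆ {a, b}) (hne : c.Nonempty) : seqSup c ∈ ({a, b} : Set (PreSeq κ)) := by
  have hle : ∀ f ∈ c, seqLE f b := fun f hf => by
    rcases hc hf with rfl | rfl
    exacts [hab, seqLE_refl f]
  by_cases hb : b ∈ c
  · have hch : IsChain seqLE c := fun f hf g hg _ => by
      rcases hc hf with rfl | rfl <;> rcases hc hg with rfl | rfl <;> simp [hab, seqLE_refl]
    exact Or.inr (seqSup_eq_of_isGreatest hch hb hle)
  · have : c = {a} := Set.eq_singleton_iff_nonempty_unique_mem.2
      ⟨hne, fun f hf => (hc hf).resolve_right fun h => hb (h ▸ hf)⟩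
    simp [this, seqSup_singleton]

end Sup

section Concatenation

def conc (b g : PreSeq κ) : PreSeq κ :=
  fun γ => if γ < seqLength b then b γ else g (γ - seqLength b)

def strip (b f : PreSeq κ) : PreSeq κ := fun δ => f (seqLength b + δ)

variable {b f g g' : PreSeq κ}

@[simp]
lemma strip_conc (b g : PreSeq κ) : strip b (conc b g) = g := by
  funext δ
  simp [strip, conc, Ordinal.add_sub_cancel]

lemma conc_injective (b : PreSeq κ) : Function.Injective (conc b) :=
  Function.LeftInverse.injective (strip_conc b)

@[simp]
lemma conc_inj : conc b g = conc b g' ↔ g = g' :=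
  (conc_injective b).eq_iff

lemma conc_strip (hb : IsSeq κ b) (hle : seqLE b f) : conc b (strip b f) = f := by
  funext γ
  by_cases hγ : γ < seqLength b
  · obtain ⟨x, hx⟩ := Option.isSome_iff_exists.1 ((hb.isSome_iff γ).2 hγ)
    simp only [conc, if_pos hγ, hx, hle γ x hx]
  · simp only [conc, if_neg hγ, strip, Ordinal.add_sub_cancel_of_le (not_lt.1 hγ)]

lemma strip_self (hb : IsSeq κ b) : strip b b = seqRoot κ := by
  funext δ
  simp [strip, seqRoot, ← Option.not_isSome_iff_eq_none, hb.isSome_iff]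

lemma conc_seqRoot (hb : IsSeq κ b) : conc b (seqRoot κ) = b := by
  simpa [strip_self hb] using conc_strip hb (seqLE_refl b)

lemma le_conc (hb : IsSeq κ b) (g : PreSeq κ) : seqLE b (conc b g) := by
  intro γ x hx
  have hγ : γ < seqLength b := (hb.isSome_iff γ).1 (by simp [hx])
  simp only [conc, if_pos hγ, hx]

lemma conc_le_conc (h : seqLE g g') : seqLE (conc b g) (conc b g') := by
  intro γ x hx
  simp only [conc] at hx ⊢
  split_ifs at hx ⊢
  exacts [hx, h _ x hx]

lemma strip_le_strip (h : seqLE f g) : seqLE (strip b f) (strip b g) :=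
  fun _ x hx => h _ x hx

@[simp]
lemma conc_le_conc_iff : seqLE (conc b g) (conc b g') ↔ seqLE g g' :=
  ⟨fun h => by simpa using strip_le_strip (b := b) h, conc_le_conc⟩

lemma add_lt_ord (hκ : ℵ₀ ≤ κ) {β δ : Ordinal} (hβ : β < κ.ord) (hδ : δ < κ.ord) :
    β + δ < κ.ord := by
  rw [Cardinal.lt_ord] at *
  rw [Ordinal.card_add]
  exact Cardinal.add_lt_of_lt hκ hβ hδ

lemma isSeq_conc (hκ : ℵ₀ ≤ κ) (hb : IsSeq κ b) (hg : IsSeq κ g) :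
    IsSeq κ (conc b g) := by
  refine ⟨seqLength b + seqLength g, add_lt_ord hκ hb.seqLength_lt hg.seqLength_lt,
    fun γ => ?_⟩
  by_cases hγ : γ < seqLength b
  · simpa [conc, hγ, hb.isSome_iff] using hγ.trans_le le_self_add
  · rw [conc, if_neg hγ, hg.isSome_iff, Ordinal.sub_lt_of_le (not_lt.1 hγ)]

lemma isSeq_strip (hb : IsSeq κ b) (hf : IsSeq κ f) (hle : seqLE b f) : IsSeq κ (strip b f) := by
  have hbf : seqLength b ≤ seqLength f := by
    by_contra! hlt
    obtain ⟨x, hx⟩ := Option.isSome_iff_exists.1 ((hb.isSome_iff _).2 hlt)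
    simpa [hle _ x hx] using (hf.isSome_iff (seqLength f)).1
  refine ⟨seqLength f - seqLength b, (Ordinal.sub_le_self _ _).trans_lt hf.seqLength_lt,
    fun δ => ?_⟩
  rw [strip, hf.isSome_iff, Ordinal.lt_sub]

lemma isChain_image_conc {d : Set (PreSeq κ)} (hd : IsChain seqLE d) :
    IsChain seqLE (conc b '' d) := by
  rintro _ ⟨g, hg, rfl⟩ _ ⟨g', hg', rfl⟩ -
  exact (hd.total hg hg').imp conc_le_conc conc_le_conc

lemma seqSup_image_conc {d : Set (PreSeq κ)} (hd : d.Nonempty)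
    (hdc : IsChain seqLE d) : seqSup (conc b '' d) = conc b (seqSup d) := by
  obtain ⟨g₀, hg₀⟩ := hd
  have hc := isChain_image_conc (b := b) hdc
  refine seqLE_antisymm (seqSup_le hc ?_) ?_
  · rintro _ ⟨g, hg, rfl⟩
    exact conc_le_conc (le_seqSup hdc hg)
  · intro γ x hx
    by_cases hγ : γ < seqLength b
    · exact (seqSup_eq_some hc).2
        ⟨conc b g₀, ⟨g₀, hg₀, rfl⟩, by simpa [conc, hγ] using hx⟩
    · rw [conc, if_neg hγ, seqSup_eq_some hdc] at hx
      obtain ⟨g, hg, hgx⟩ := hx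
      exact (seqSup_eq_some hc).2 ⟨conc b g, ⟨g, hg, rfl⟩, by simpa [conc, hγ] using hgx⟩

end Concatenation

end Sequences

section Codes

variable {Z : Type*} {Basic : Set (Set Z)}

namespace BorelStarCode

variable (code : BorelStarCode κ Z Basic) {f : PreSeq κ}

lemma not_isLeaf_of_h_eq_inter (h : code.h f = .inter) : ¬ IsLeaf code.T f := fun hf => by
  obtain ⟨s, -, hs⟩ := code.label_leaf f hf.1 hf
  simp [hs] at h

lemma not_isLeaf_of_h_eq_union (h : code.h f = .union) : ¬ IsLeaf code.T f := fun hf => by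
  obtain ⟨s, -, hs⟩ := code.label_leaf f hf.1 hf
  simp [hs] at h

lemma isLeaf_of_h_eq_leaf {s : Set Z} (hf : f ∈ code.T) (h : code.h f = .leaf s) :
    IsLeaf code.T f := by
  by_contra hnl
  rcases code.label_node f hf hnl with h' | h' <;> simp [h'] at h

end BorelStarCode

def IsLegalStrategy (code : BorelStarCode κ Z Basic) (σ : PreSeq κ → PreSeq κ) : Prop :=
  ∀ f, Reach code σ f → code.h f = .union → ImmSucc code.T f (σ f)

def IsWinningStrategy (code : BorelStarCode κ Z Basic) (x : Z) (σ : PreSeq κ → PreSeq κ) :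
    Prop :=
  IsLegalStrategy code σ ∧ ∀ f s, Reach code σ f → code.h f = .leaf s → x ∈ s

def leafCode (hκ : 1 < κ) {s : Set Z} (hs : s ∈ Basic) : BorelStarCode κ Z Basic where
  T := {seqRoot κ}
  h := fun _ => .leaf s
  mem_isSeq := by
    rintro f rfl
    exact isSeq_seqRoot (zero_lt_one.trans hκ).ne'
  root_mem := rfl
  downward := by
    rintro f rfl g - hle
    exact eq_seqRoot_of_le hle
  card_le := by
    simpa using (Cardinal.one_lt_lift_iff.{0, 1}.2 hκ).le
  no_long_chain := fun c hc _ =>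
    (Cardinal.mk_le_mk_of_subset hc).trans_lt (by simpa using Cardinal.one_lt_lift_iff.{0, 1}.2 hκ)
  chain_sup := fun c hc hne _ => by
    simpa using seqSup_mem_of_subset_pair (seqLE_refl _) (by simpa using hc) hne
  label_leaf := fun _ _ _ => ⟨s, hs, rfl⟩
  label_node := by
    rintro f rfl hnl
    exact absurd ⟨rfl, fun g hg _ => hg⟩ hnl

lemma iIWinsBStar_leafCode_iff (hκ : 1 < κ) {s : Set Z} (hs : s ∈ Basic) (x : Z) :
    IIWinsBStar (leafCode (κ := κ) hκ hs) x ↔ x ∈ s := by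
  refine ⟨fun ⟨_, _, hσ⟩ => hσ _ s .root rfl, fun hx => ⟨id, ?_, ?_⟩⟩
  · intro f _ h
    cases h
  · intro f t _ h
    cases h
    exact hx

lemma isBorelStar_of_mem (hκ : 1 < κ) {s : Set Z} (hs : s ∈ Basic) :
    IsBorelStar κ Basic s :=
  ⟨leafCode hκ hs, by ext x; exact (iIWinsBStar_leafCode_iff hκ hs x).symm⟩

end Codes

section Fan

variable {Z : Type*}

def seqSingle (j : O κ) : PreSeq κ := fun γ => if γ = 0 then some j else none

@[simp]
lemma seqSingle_zero (j : O κ) : seqSingle j 0 = some j := by simp [seqSingle]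

lemma seqSingle_ne_seqRoot (j : O κ) : seqSingle j ≠ seqRoot κ := fun h => by
  simpa [seqRoot] using congrFun h 0

lemma eq_of_seqSingle_le {j j' : O κ} (h : seqLE (seqSingle j) (seqSingle j')) : j = j' := by
  simpa using (h 0 j (seqSingle_zero j)).symm

lemma isSeq_seqSingle (hκ : 1 < κ) (j : O κ) : IsSeq κ (seqSingle j) := by
  refine ⟨1, by rwa [Cardinal.lt_ord, Ordinal.card_one], fun γ => ?_⟩
  by_cases hγ : γ = 0 <;> simp [seqSingle, hγ]

lemma eq_seqRoot_or_eq_seqSingle_of_le {g : PreSeq κ} {j : O κ} (hg : IsSeq κ g)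
    (h : seqLE g (seqSingle j)) : g = seqRoot κ ∨ g = seqSingle j := by
  cases hg0 : g 0 with
  | none =>
    left
    have hlen : seqLength g = 0 := by
      simpa [hg0, pos_iff_ne_zero] using hg.isSome_iff 0
    funext γ
    simp [seqRoot, ← Option.not_isSome_iff_eq_none, hg.isSome_iff, hlen]
  | some y =>
    right
    refine seqLE_antisymm h fun γ x hx => ?_
    obtain ⟨rfl, rfl⟩ : γ = 0 ∧ j = x := by simpa [seqSingle] using hx
    simpa [seqSingle, hg0, eq_comm] using h 0 y hg0

variable (κ) in
def fanTree : Set (PreSeq κ) := insert (seqRoot κ) (range seqSingle)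

lemma mk_O : Cardinal.mk (O κ) = Cardinal.lift.{1} κ := by
  simp [Cardinal.mk_Iio_ordinal]

lemma seqSingle_immSucc_fanTree (j : O κ) : ImmSucc (fanTree κ) (seqRoot κ) (seqSingle j) := by
  refine ⟨Or.inr ⟨j, rfl⟩, seqRoot_le _, (seqSingle_ne_seqRoot j).symm, ?_⟩
  rintro g (rfl | ⟨j', rfl⟩) - hle
  exacts [Or.inl rfl, Or.inr (by rw [eq_of_seqSingle_le hle])]

lemma isLeaf_fanTree_seqSingle (j : O κ) : IsLeaf (fanTree κ) (seqSingle j) := by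
  refine ⟨Or.inr ⟨j, rfl⟩, ?_⟩
  rintro g (rfl | ⟨j', rfl⟩) hle
  · exact absurd (eq_seqRoot_of_le hle) (seqSingle_ne_seqRoot j)
  · rw [eq_of_seqSingle_le hle]

lemma exists_subset_pair_of_isChain (hκ : κ ≠ 0) {c : Set (PreSeq κ)} (hc : c ⊆ fanTree κ)
    (hch : IsChain seqLE c) : ∃ j, c ⊆ {seqRoot κ, seqSingle j} := by
  by_cases hex : ∃ j, seqSingle j ∈ c
  · obtain ⟨j, hj⟩ := hex
    refine ⟨j, fun f hf => ?_⟩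
    rcases hc hf with rfl | ⟨j', rfl⟩
    · exact Or.inl rfl
    · rcases hch.total hf hj with h | h
      exacts [Or.inr (congrArg _ (eq_of_seqSingle_le h)),
        Or.inr (congrArg _ (eq_of_seqSingle_le h)).symm]
  · refine ⟨⟨0, Cardinal.ord_pos.2 (pos_iff_ne_zero.2 hκ)⟩, fun f hf => ?_⟩
    rcases hc hf with rfl | ⟨j', rfl⟩
    exacts [Or.inl rfl, absurd ⟨j', hf⟩ hex]

open scoped Classical in
def fanCode (hκ : ℵ₀ ≤ κ) (A : O κ → Set Z) (op : BLabel Z)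
    (hop : op = .inter ∨ op = .union) : BorelStarCode κ Z (range A) where
  T := fanTree κ
  h p := if p = seqRoot κ then op else (p 0).elim .inter fun j => .leaf (A j)
  mem_isSeq := by
    rintro f (rfl | ⟨j, rfl⟩)
    exacts [isSeq_seqRoot (Cardinal.aleph0_pos.trans_le hκ).ne',
      isSeq_seqSingle (Cardinal.one_lt_aleph0.trans_le hκ) j]
  root_mem := Or.inl rfl
  downward := by
    rintro f (rfl | ⟨j, rfl⟩) g hg hle
    · exact Or.inl (eq_seqRoot_of_le hle)
    · rcases eq_seqRoot_or_eq_seqSingle_of_le hg hle with rfl | rfl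
      exacts [Or.inl rfl, Or.inr ⟨j, rfl⟩]
  card_le := by
    have hrange : Cardinal.mk (range (seqSingle (κ := κ))) ≤ Cardinal.lift.{1} κ :=
      Cardinal.mk_range_le.trans mk_O.le
    calc Cardinal.mk (fanTree κ) ≤ Cardinal.lift.{1} κ + 1 :=
          Cardinal.mk_insert_le.trans (add_le_add_left hrange 1)
      _ = Cardinal.lift.{1} κ := Cardinal.add_one_eq (by simpa using hκ)
  no_long_chain := fun c hc hch => by
    obtain ⟨j, hj⟩ :=
      exists_subset_pair_of_isChain (Cardinal.aleph0_pos.trans_le hκ).ne' hc hch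
    calc Cardinal.mk c ≤ Cardinal.mk ({seqRoot κ, seqSingle j} : Set (PreSeq κ)) :=
          Cardinal.mk_le_mk_of_subset hj
      _ < ℵ₀ := Cardinal.lt_aleph0_of_finite _
      _ ≤ Cardinal.lift.{1} κ := by simpa using hκ
  chain_sup := fun c hc hne hch => by
    obtain ⟨j, hj⟩ :=
      exists_subset_pair_of_isChain (Cardinal.aleph0_pos.trans_le hκ).ne' hc hch
    rcases seqSup_mem_of_subset_pair (seqRoot_le _) hj hne with h | h <;> rw [h]
    exacts [Or.inl rfl, Or.inr ⟨j, rfl⟩]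
  label_leaf := by
    rintro f (rfl | ⟨j, rfl⟩) hleaf
    · have j₀ : O κ := ⟨0, Cardinal.ord_pos.2 (Cardinal.aleph0_pos.trans_le hκ)⟩
      exact absurd (hleaf.2 _ (Or.inr ⟨j₀, rfl⟩) (seqRoot_le _)) (seqSingle_ne_seqRoot j₀)
    · exact ⟨A j, ⟨j, rfl⟩, by simp [seqSingle_ne_seqRoot]⟩
  label_node := by
    rintro f (rfl | ⟨j, rfl⟩) hnl
    · simpa using hop
    · exact absurd (isLeaf_fanTree_seqSingle j) hnl

variable {hκ : ℵ₀ ≤ κ} {A : O κ → Set Z} {op : BLabel Z}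
  {hop : op = .inter ∨ op = .union}

@[simp]
lemma fanCode_h_seqRoot : (fanCode hκ A op hop).h (seqRoot κ) = op := if_pos rfl

@[simp]
lemma fanCode_h_seqSingle (j : O κ) : (fanCode hκ A op hop).h (seqSingle j) = .leaf (A j) := by
  simp [fanCode, seqSingle_ne_seqRoot]

lemma eq_seqRoot_of_fanCode_h_eq_union {f : PreSeq κ}
    (h : (fanCode hκ A op hop).h f = .union) : f = seqRoot κ := by
  by_contra hf
  simp only [fanCode, if_neg hf] at h
  cases hf0 : f 0 <;> simp [hf0] at h

lemma exists_eq_of_fanCode_h_eq_leaf {f : PreSeq κ} {s : Set Z}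
    (h : (fanCode hκ A op hop).h f = .leaf s) : ∃ j, s = A j := by
  by_cases hf : f = seqRoot κ
  · rcases hop with rfl | rfl <;> simp [fanCode, hf] at h
  · simp only [fanCode, if_neg hf] at h
    cases hf0 : f 0 <;> simp [hf0] at h
    exact ⟨_, h.symm⟩

lemma iIWinsBStar_fanCode_union_iff (x : Z) :
    IIWinsBStar (fanCode hκ A .union (.inr rfl)) x ↔ ∃ j, x ∈ A j := by
  constructor
  · rintro ⟨σ, hσ, hwin⟩
    have hroot : (fanCode hκ A .union (.inr rfl)).h (seqRoot κ) = .union := fanCode_h_seqRoot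
    obtain ⟨j, hj⟩ : ∃ j, σ (seqRoot κ) = seqSingle j := by
      obtain ⟨hmem, -, hne, -⟩ := hσ _ .root hroot
      exact hmem.resolve_left hne.symm |>.imp fun j hj => hj.symm
    exact ⟨j, hwin _ _ (hj ▸ Reach.union _ .root hroot) (fanCode_h_seqSingle j)⟩
  · rintro ⟨j, hx⟩
    have hσ : IsLegalStrategy (fanCode hκ A .union (.inr rfl)) fun _ => seqSingle j :=
      fun f _ hf => eq_seqRoot_of_fanCode_h_eq_union hf ▸ seqSingle_immSucc_fanTree j
    have hreach : ∀ f, Reach (fanCode hκ A .union (.inr rfl)) (fun _ => seqSingle j) f →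
        f ∈ ({seqRoot κ, seqSingle j} : Set (PreSeq κ)) := by
      intro f hf
      induction hf with
      | root => exact Or.inl rfl
      | inter f _ _ hlab _ ih => rcases ih with rfl | rfl <;> simp at hlab
      | union => exact Or.inr rfl
      | lim c hne _ _ ih => exact seqSup_mem_of_subset_pair (seqRoot_le _) ih hne
    refine ⟨_, hσ, fun f s hf hlab => ?_⟩
    rcases hreach f hf with rfl | rfl <;> simp at hlab
    exact hlab ▸ hx

lemma iIWinsBStar_fanCode_inter_iff (x : Z) :
    IIWinsBStar (fanCode hκ A .inter (.inl rfl)) x ↔ ∀ j, x ∈ A j := by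
  constructor
  · rintro ⟨σ, -, hwin⟩ j
    exact hwin _ _ (.inter _ _ .root fanCode_h_seqRoot (seqSingle_immSucc_fanTree j))
      (fanCode_h_seqSingle j)
  · refine fun hx => ⟨id, fun f _ hf => ?_, fun f s _ hf => ?_⟩
    · obtain rfl := eq_seqRoot_of_fanCode_h_eq_union hf
      simp at hf
    · obtain ⟨j, rfl⟩ := exists_eq_of_fanCode_h_eq_leaf hf
      exact hx j

end Fan

section Graft

variable {Z : Type*} {Basic Basic' : Set (Set Z)}
  {code : BorelStarCode κ Z Basic} {D : PreSeq κ → BorelStarCode κ Z Basic'}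
  {b b' g g' p q : PreSeq κ} {c : Set (PreSeq κ)}

variable (code D) in
def graftTree : Set (PreSeq κ) := code.T ∪ ⋃ b ∈ {b | IsLeaf code.T b}, conc b '' (D b).T

variable (code D) in
def InGraft (p : PreSeq κ) : Prop := ∃ b, IsLeaf code.T b ∧ ∃ g ∈ (D b).T, conc b g = p

lemma mem_graftTree : p ∈ graftTree code D ↔ p ∈ code.T ∨ InGraft code D p := by
  simp [graftTree, InGraft]

lemma conc_mem_graftTree (hb : IsLeaf code.T b) (hg : g ∈ (D b).T) :
    conc b g ∈ graftTree code D :=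
  mem_graftTree.2 (Or.inr ⟨b, hb, g, hg, rfl⟩)

lemma le_conc_of_isLeaf (hb : IsLeaf code.T b) (g : PreSeq κ) : seqLE b (conc b g) :=
  le_conc (code.mem_isSeq b hb.1) g

lemma eq_of_isLeaf_of_le (hb : IsLeaf code.T b) (hb' : IsLeaf code.T b') (h : seqLE b p)
    (h' : seqLE b' p) : b = b' :=
  ((code.mem_isSeq b hb.1).le_or_le (code.mem_isSeq b' hb'.1) h h').elim
    (fun hle => (hb.2 b' hb'.1 hle).symm) (fun hle => hb'.2 b hb.1 hle)

lemma eq_of_conc_eq_conc (hb : IsLeaf code.T b) (hb' : IsLeaf code.T b')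
    (h : conc b g = conc b' g') : b = b' ∧ g = g' := by
  obtain rfl := eq_of_isLeaf_of_le hb hb' (le_conc_of_isLeaf hb g) (h ▸ le_conc_of_isLeaf hb' g')
  exact ⟨rfl, conc_injective b h⟩

lemma InGraft.choose_eq (hb : IsLeaf code.T b) (hp : InGraft code D (conc b g)) :
    hp.choose = b := by
  obtain ⟨hb', g', -, h⟩ := hp.choose_spec
  exact (eq_of_conc_eq_conc hb' hb h).1

lemma eq_of_conc_le (hb : IsLeaf code.T b) (hq : q ∈ code.T) (hle : seqLE (conc b g) q) :
    q = b ∧ conc b g = b := by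
  have hbq : seqLE b q := seqLE_trans (le_conc_of_isLeaf hb g) hle
  obtain rfl := hb.2 q hq hbq
  exact ⟨rfl, seqLE_antisymm hle (le_conc_of_isLeaf hb g)⟩

lemma not_inGraft (hp : p ∈ code.T) (hnl : ¬ IsLeaf code.T p) : ¬ InGraft code D p := by
  rintro ⟨b, hb, g, -, rfl⟩
  exact hnl (by rwa [(eq_of_conc_le hb hp (seqLE_refl _)).1])

lemma mem_graftTree_cases (hp : p ∈ graftTree code D) :
    (p ∈ code.T ∧ ¬ IsLeaf code.T p) ∨
      ∃ b, IsLeaf code.T b ∧ ∃ g ∈ (D b).T, conc b g = p := by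
  rcases mem_graftTree.1 hp with hpT | hp
  · by_cases hnl : IsLeaf code.T p
    · exact Or.inr ⟨p, hnl, seqRoot κ, (D p).root_mem, conc_seqRoot (code.mem_isSeq p hpT)⟩
    · exact Or.inl ⟨hpT, hnl⟩
  · exact Or.inr hp

lemma exists_conc_eq_of_le (hb : IsLeaf code.T b) (hp : p ∈ graftTree code D)
    (hle : seqLE b p) : ∃ g ∈ (D b).T, conc b g = p := by
  rcases mem_graftTree.1 hp with hpT | ⟨b', hb', g', hg', rfl⟩
  · exact ⟨seqRoot κ, (D b).root_mem, by
      rw [conc_seqRoot (code.mem_isSeq b hb.1), hb.2 p hpT hle]⟩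
  · obtain rfl := eq_of_isLeaf_of_le hb hb' hle (le_conc_of_isLeaf hb' g')
    exact ⟨g', hg', rfl⟩

variable (code D) in
def graftLabel (p : PreSeq κ) : BLabel Z :=
  open scoped Classical in
  if hp : InGraft code D p then (D hp.choose).h (strip hp.choose p) else code.h p

lemma graftLabel_conc (hb : IsLeaf code.T b) (hg : g ∈ (D b).T) :
    graftLabel code D (conc b g) = (D b).h g := by
  have hp : InGraft code D (conc b g) := ⟨b, hb, g, hg, rfl⟩
  rw [graftLabel, dif_pos hp, hp.choose_eq hb, strip_conc]

lemma graftLabel_of_not_isLeaf (hp : p ∈ code.T) (hnl : ¬ IsLeaf code.T p) :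
    graftLabel code D p = code.h p := by
  rw [graftLabel, dif_neg (not_inGraft hp hnl)]

lemma immSucc_graftTree_of_immSucc (h : ImmSucc code.T p q) :
    ImmSucc (graftTree code D) p q := by
  refine ⟨Or.inl h.1, h.2.1, h.2.2.1, fun w hw hpw hwq => ?_⟩
  rcases mem_graftTree.1 hw with hwT | ⟨b, hb, g, -, rfl⟩
  · exact h.2.2.2 w hwT hpw hwq
  · obtain ⟨rfl, hgb⟩ := eq_of_conc_le hb h.1 hwq
    exact Or.inr hgb

lemma immSucc_of_immSucc_graftTree (hp : p ∈ code.T) (hnl : ¬ IsLeaf code.T p)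
    (h : ImmSucc (graftTree code D) p q) : ImmSucc code.T p q := by
  have hq : q ∈ code.T := by
    rcases mem_graftTree.1 h.1 with hq | ⟨b, hb, g, -, rfl⟩
    · exact hq
    have hbq := le_conc_of_isLeaf hb g
    rcases (code.mem_isSeq p hp).le_or_le (code.mem_isSeq b hb.1) h.2.1 hbq with hpb | hbp
    · rcases h.2.2.2 b (Or.inl hb.1) hpb hbq with hbp | hbq'
      exacts [absurd (hbp ▸ hb) hnl, hbq' ▸ hb.1]
    · exact absurd (hb.2 p hp hbp ▸ hb) hnl
  exact ⟨hq, h.2.1, h.2.2.1, fun w hw => h.2.2.2 w (Or.inl hw)⟩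

lemma immSucc_graftTree_conc (hb : IsLeaf code.T b) (h : ImmSucc (D b).T g g') :
    ImmSucc (graftTree code D) (conc b g) (conc b g') := by
  refine ⟨conc_mem_graftTree hb h.1, conc_le_conc h.2.1,
    fun heq => h.2.2.1 (conc_injective b heq), fun w hw hgw hwg' => ?_⟩
  obtain ⟨w, hw', rfl⟩ :=
    exists_conc_eq_of_le hb hw (seqLE_trans (le_conc_of_isLeaf hb g) hgw)
  rw [conc_le_conc_iff] at hgw hwg'
  exact (h.2.2.2 w hw' hgw hwg').imp (congrArg _) (congrArg _)

lemma immSucc_strip_of_immSucc_graftTree (hb : IsLeaf code.T b)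
    (h : ImmSucc (graftTree code D) (conc b g) q) :
    ImmSucc (D b).T g (strip b q) ∧ conc b (strip b q) = q := by
  obtain ⟨g', hg', rfl⟩ :=
    exists_conc_eq_of_le hb h.1 (seqLE_trans (le_conc_of_isLeaf hb g) h.2.1)
  refine ⟨⟨by simpa using hg', by simpa using h.2.1, by simpa using h.2.2.1,
    fun w hw hgw hwg' => ?_⟩, by simp⟩
  rw [strip_conc] at hwg' ⊢
  exact (h.2.2.2 (conc b w) (conc_mem_graftTree hb hw) (conc_le_conc hgw)
    (conc_le_conc hwg')).imp conc_inj.1 conc_inj.1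

lemma isLeaf_graftTree_conc_iff (hb : IsLeaf code.T b) (hg : g ∈ (D b).T) :
    IsLeaf (graftTree code D) (conc b g) ↔ IsLeaf (D b).T g := by
  refine ⟨fun h => ⟨hg, fun w hw hgw => ?_⟩,
    fun h => ⟨conc_mem_graftTree hb hg, fun w hw hgw => ?_⟩⟩
  · exact conc_injective b (h.2 _ (conc_mem_graftTree hb hw) (conc_le_conc hgw))
  · obtain ⟨w, hw', rfl⟩ :=
      exists_conc_eq_of_le hb hw (seqLE_trans (le_conc_of_isLeaf hb g) hgw)
    rw [h.2 w hw' (conc_le_conc_iff.1 hgw)]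

lemma not_isLeaf_graftTree (hp : p ∈ code.T) (hnl : ¬ IsLeaf code.T p) :
    ¬ IsLeaf (graftTree code D) p :=
  fun h => hnl ⟨hp, fun w hw => h.2 w (Or.inl hw)⟩

lemma exists_image_conc_eq_diff (hc : c ⊆ graftTree code D) (hch : IsChain seqLE c)
    (hcT : ¬ c ⊆ code.T) : ∃ b, IsLeaf code.T b ∧ ∃ d ⊆ (D b).T,
      d.Nonempty ∧ IsChain seqLE d ∧ conc b '' d = c \ code.T := by
  obtain ⟨p₀, hp₀, hp₀T⟩ := Set.not_subset.1 hcT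
  obtain ⟨b, hb, g₀, -, rfl⟩ := ((mem_graftTree_cases (hc hp₀)).resolve_left (hp₀T ·.1))
  have hdiff : ∀ p ∈ c \ code.T, ∃ g ∈ (D b).T, conc b g = p := by
    rintro p ⟨hp, hpT⟩
    obtain ⟨b', hb', g, hg, rfl⟩ := (mem_graftTree_cases (hc hp)).resolve_left (hpT ·.1)
    obtain rfl : b = b' := by
      rcases hch.total hp₀ hp with h | h
      · exact eq_of_isLeaf_of_le hb hb' (seqLE_trans (le_conc_of_isLeaf hb g₀) h)
          (le_conc_of_isLeaf hb' g)
      · exact eq_of_isLeaf_of_le hb hb' (le_conc_of_isLeaf hb g₀)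
          (seqLE_trans (le_conc_of_isLeaf hb' g) h)
    exact ⟨g, hg, rfl⟩
  refine ⟨b, hb, strip b '' (c \ code.T), ?_, ⟨_, _, ⟨hp₀, hp₀T⟩, rfl⟩, ?_, ?_⟩
  · rintro _ ⟨p, hp, rfl⟩
    obtain ⟨g, hg, rfl⟩ := hdiff p hp
    simpa using hg
  · rintro _ ⟨p, hp, rfl⟩ _ ⟨q, hq, rfl⟩ -
    exact (hch.total hp.1 hq.1).imp strip_le_strip strip_le_strip
  · rw [Set.image_image]
    refine (Set.image_congr fun p hp => ?_).trans (Set.image_id _)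
    obtain ⟨g, -, rfl⟩ := hdiff p hp
    simp

lemma seqSup_eq_seqSup_diff (hc : c ⊆ graftTree code D) (hch : IsChain seqLE c)
    (hcT : ¬ c ⊆ code.T) : seqSup c = seqSup (c \ code.T) := by
  obtain ⟨q, hq, hqT⟩ := Set.not_subset.1 hcT
  refine seqSup_eq_of_cofinal hch Set.sdiff_subset fun p hp => ?_
  by_cases hpT : p ∈ code.T
  · refine ⟨q, ⟨hq, hqT⟩, (hch.total hp hq).resolve_right fun hqp => hqT ?_⟩
    obtain ⟨b, hb, g, -, rfl⟩ := (mem_graftTree_cases (hc hq)).resolve_left (hqT ·.1)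
    rw [(eq_of_conc_le hb hpT hqp).2]
    exact hb.1
  · exact ⟨p, ⟨hp, hpT⟩, seqLE_refl p⟩

lemma graftTree_downward (hp : p ∈ graftTree code D) (hq : IsSeq κ q) (hqp : seqLE q p) :
    q ∈ graftTree code D := by
  rcases mem_graftTree.1 hp with hpT | ⟨b, hb, g, hg, rfl⟩
  · exact Or.inl (code.downward p hpT q hq hqp)
  have hbS := code.mem_isSeq b hb.1
  rcases hq.le_or_le hbS hqp (le_conc_of_isLeaf hb g) with hqb | hbq
  · exact Or.inl (code.downward b hb.1 q hq hqb)
  · rw [← conc_strip hbS hbq] at hqp ⊢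
    exact conc_mem_graftTree hb
      ((D b).downward g hg _ (isSeq_strip hbS hq hbq) (conc_le_conc_iff.1 hqp))

lemma mk_graftTree_le (hκ : ℵ₀ ≤ κ) :
    Cardinal.mk (graftTree code D) ≤ Cardinal.lift.{1} κ := by
  have hκ' : ℵ₀ ≤ Cardinal.lift.{1} κ := by simpa using hκ
  have hgrafts : Cardinal.mk (⋃ b ∈ {b | IsLeaf code.T b}, conc b '' (D b).T) ≤
      Cardinal.lift.{1} κ := by
    refine (Cardinal.mk_biUnion_le _ _).trans ?_
    calc _ ≤ Cardinal.lift.{1} κ * Cardinal.lift.{1} κ := by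
          gcongr
          · exact (Cardinal.mk_le_mk_of_subset fun b hb => hb.1).trans code.card_le
          · exact ciSup_le' fun b => Cardinal.mk_image_le.trans (D b).card_le
      _ = Cardinal.lift.{1} κ := Cardinal.mul_eq_self hκ'
  calc Cardinal.mk (graftTree code D) ≤ Cardinal.lift.{1} κ + Cardinal.lift.{1} κ :=
        (Cardinal.mk_union_le _ _).trans (add_le_add code.card_le hgrafts)
    _ = Cardinal.lift.{1} κ := Cardinal.add_eq_self hκ'

lemma mk_lt_of_isChain_graftTree (hκ : ℵ₀ ≤ κ) (hc : c ⊆ graftTree code D)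
    (hch : IsChain seqLE c) : Cardinal.mk c < Cardinal.lift.{1} κ := by
  by_cases hcT : c ⊆ code.T
  · exact code.no_long_chain c hcT hch
  obtain ⟨b, -, d, hd, -, hdc, hcd⟩ := exists_image_conc_eq_diff hc hch hcT
  have hdiff : Cardinal.mk (c \ code.T : Set (PreSeq κ)) < Cardinal.lift.{1} κ :=
    hcd ▸ Cardinal.mk_image_le.trans_lt ((D b).no_long_chain d hd hdc)
  calc Cardinal.mk c = Cardinal.mk (c ∩ code.T ∪ c \ code.T : Set (PreSeq κ)) := by
        rw [Set.inter_union_sdiff]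
    _ ≤ Cardinal.mk (c ∩ code.T : Set (PreSeq κ)) +
          Cardinal.mk (c \ code.T : Set (PreSeq κ)) :=
        Cardinal.mk_union_le _ _
    _ < Cardinal.lift.{1} κ := Cardinal.add_lt_of_lt (by simpa using hκ)
        (code.no_long_chain _ Set.inter_subset_right (hch.mono Set.inter_subset_left)) hdiff

lemma seqSup_eq_conc_of_isChain_graftTree (hc : c ⊆ graftTree code D) (hch : IsChain seqLE c)
    (hcT : ¬ c ⊆ code.T) : ∃ b, IsLeaf code.T b ∧ ∃ d ⊆ (D b).T,
      d.Nonempty ∧ IsChain seqLE d ∧ conc b '' d = c \ code.T ∧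
        seqSup c = conc b (seqSup d) := by
  obtain ⟨b, hb, d, hd, hdne, hdc, hcd⟩ := exists_image_conc_eq_diff hc hch hcT
  refine ⟨b, hb, d, hd, hdne, hdc, hcd, ?_⟩
  rw [seqSup_eq_seqSup_diff hc hch hcT, ← hcd, seqSup_image_conc hdne hdc]

lemma seqSup_mem_graftTree (hc : c ⊆ graftTree code D) (hne : c.Nonempty)
    (hch : IsChain seqLE c) : seqSup c ∈ graftTree code D := by
  by_cases hcT : c ⊆ code.T
  · exact Or.inl (code.chain_sup c hcT hne hch)
  obtain ⟨b, hb, d, hd, hdne, hdc, -, hsup⟩ := seqSup_eq_conc_of_isChain_graftTree hc hch hcT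
  exact hsup ▸ conc_mem_graftTree hb ((D b).chain_sup d hd hdne hdc)

variable (code D) in
def graftCode (hκ : ℵ₀ ≤ κ) : BorelStarCode κ Z Basic' where
  T := graftTree code D
  h := graftLabel code D
  mem_isSeq p hp := by
    rcases mem_graftTree.1 hp with hpT | ⟨b, hb, g, hg, rfl⟩
    exacts [code.mem_isSeq p hpT,
      isSeq_conc hκ (code.mem_isSeq b hb.1) ((D b).mem_isSeq g hg)]
  root_mem := Or.inl code.root_mem
  downward _ hp _ hq hqp := graftTree_downward hp hq hqp
  card_le := mk_graftTree_le hκ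
  no_long_chain _ hc hch := mk_lt_of_isChain_graftTree hκ hc hch
  chain_sup _ hc hne hch := seqSup_mem_graftTree hc hne hch
  label_leaf p hp hleaf := by
    rcases mem_graftTree_cases hp with ⟨hpT, hnl⟩ | ⟨b, hb, g, hg, rfl⟩
    · exact absurd hleaf (not_isLeaf_graftTree hpT hnl)
    · obtain ⟨s, hs, hlab⟩ :=
        (D b).label_leaf g hg ((isLeaf_graftTree_conc_iff hb hg).1 hleaf)
      exact ⟨s, hs, (graftLabel_conc hb hg).trans hlab⟩
  label_node p hp hnl := by
    rcases mem_graftTree_cases hp with ⟨hpT, hnl'⟩ | ⟨b, hb, g, hg, rfl⟩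
    · rw [graftLabel_of_not_isLeaf hpT hnl']
      exact code.label_node p hpT hnl'
    · rw [graftLabel_conc hb hg]
      exact (D b).label_node g hg (mt (isLeaf_graftTree_conc_iff hb hg).2 hnl)

end Graft

section GraftGame

variable {Z : Type*} {Basic Basic' : Set (Set Z)} {hκ : ℵ₀ ≤ κ}
  {code : BorelStarCode κ Z Basic} {D : PreSeq κ → BorelStarCode κ Z Basic'}
  {σ : PreSeq κ → PreSeq κ} {τ : PreSeq κ → PreSeq κ → PreSeq κ} {b g p : PreSeq κ}

lemma graftCode_h : (graftCode code D hκ).h = graftLabel code D := rfl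

variable (code D) in
def graftStrategy (σ : PreSeq κ → PreSeq κ) (τ : PreSeq κ → PreSeq κ → PreSeq κ)
    (p : PreSeq κ) : PreSeq κ :=
  open scoped Classical in
  if hp : InGraft code D p then conc hp.choose (τ hp.choose (strip hp.choose p)) else σ p

lemma graftStrategy_conc (hb : IsLeaf code.T b) (hg : g ∈ (D b).T) :
    graftStrategy code D σ τ (conc b g) = conc b (τ b g) := by
  have hp : InGraft code D (conc b g) := ⟨b, hb, g, hg, rfl⟩
  rw [graftStrategy, dif_pos hp, hp.choose_eq hb, strip_conc]

lemma graftStrategy_of_not_isLeaf (hp : p ∈ code.T) (hnl : ¬ IsLeaf code.T p) :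
    graftStrategy code D σ τ p = σ p := by
  rw [graftStrategy, dif_neg (not_inGraft hp hnl)]

variable (code D) in
/-- The invariant satisfied by the positions reachable under `graftStrategy code D σ τ`. -/
def GraftPos (σ : PreSeq κ → PreSeq κ) (τ : PreSeq κ → PreSeq κ → PreSeq κ)
    (p : PreSeq κ) : Prop :=
  (p ∈ code.T ∧ ¬ IsLeaf code.T p ∧ Reach code σ p) ∨
    ∃ b, IsLeaf code.T b ∧ Reach code σ b ∧
      ∃ g ∈ (D b).T, Reach (D b) (τ b) g ∧ conc b g = p

lemma graftPos_of_reach (hp : p ∈ code.T) (h : Reach code σ p) : GraftPos code D σ τ p := by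
  by_cases hnl : IsLeaf code.T p
  · exact Or.inr ⟨p, hnl, h, seqRoot κ, (D p).root_mem, .root,
      conc_seqRoot (code.mem_isSeq p hp)⟩
  · exact Or.inl ⟨hp, hnl, h⟩

lemma GraftPos.reach_conc (h : GraftPos code D σ τ (conc b g)) (hb : IsLeaf code.T b) :
    Reach code σ b ∧ Reach (D b) (τ b) g := by
  rcases h with ⟨hpT, hnl, -⟩ | ⟨b', hb', hb'r, g', -, hg'r, h⟩
  · exact absurd (by rwa [(eq_of_conc_le hb hpT (seqLE_refl _)).1]) hnl
  · obtain ⟨rfl, rfl⟩ := eq_of_conc_eq_conc hb' hb h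
    exact ⟨hb'r, hg'r⟩

lemma GraftPos.mem_graftTree (h : GraftPos code D σ τ p) : p ∈ graftTree code D := by
  rcases h with ⟨hpT, -⟩ | ⟨b, hb, -, g, hg, -, rfl⟩
  exacts [Or.inl hpT, conc_mem_graftTree hb hg]

lemma graftPos_seqSup {c : Set (PreSeq κ)} (hne : c.Nonempty) (hch : IsChain seqLE c)
    (hc : ∀ p ∈ c, GraftPos code D σ τ p) : GraftPos code D σ τ (seqSup c) := by
  by_cases hcT : c ⊆ code.T
  · have hreach : ∀ p ∈ c, Reach code σ p := fun p hp => by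
      rcases hc p hp with ⟨-, -, hr⟩ | ⟨b, hb, hbr, g, -, -, rfl⟩
      · exact hr
      · rwa [(eq_of_conc_le hb (hcT hp) (seqLE_refl _)).2]
    exact graftPos_of_reach (code.chain_sup c hcT hne hch) (.lim c hne hch hreach)
  obtain ⟨b, hb, d, hd, ⟨g₀, hg₀⟩, hdc, hcd, hsup⟩ :=
    seqSup_eq_conc_of_isChain_graftTree (fun p hp => (hc p hp).mem_graftTree) hch hcT
  have hreach : ∀ g ∈ d, Reach code σ b ∧ Reach (D b) (τ b) g := fun g hg =>
    (hc _ (hcd ▸ Set.mem_image_of_mem _ hg : conc b g ∈ c \ code.T).1).reach_conc hb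
  exact hsup ▸ Or.inr ⟨b, hb, (hreach g₀ hg₀).1, seqSup d,
    (D b).chain_sup d hd ⟨g₀, hg₀⟩ hdc,
    .lim d ⟨g₀, hg₀⟩ hdc fun g hg => (hreach g hg).2, rfl⟩

lemma graftPos_of_reach_graftCode (hσ : IsLegalStrategy code σ)
    (hτ : ∀ b, IsLeaf code.T b → Reach code σ b → IsLegalStrategy (D b) (τ b))
    (h : Reach (graftCode code D hκ) (graftStrategy code D σ τ) p) :
    GraftPos code D σ τ p := by
  induction h with
  | root => exact graftPos_of_reach code.root_mem .root
  | inter p q _ hlab hsucc ih =>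
    rcases ih with ⟨hpT, hnl, hr⟩ | ⟨b, hb, hbr, g, hg, hgr, rfl⟩
    · rw [graftCode_h, graftLabel_of_not_isLeaf hpT hnl] at hlab
      have hsucc' := immSucc_of_immSucc_graftTree hpT hnl hsucc
      exact graftPos_of_reach hsucc'.1 (.inter p q hr hlab hsucc')
    · rw [graftCode_h, graftLabel_conc hb hg] at hlab
      obtain ⟨hsucc', hq⟩ := immSucc_strip_of_immSucc_graftTree hb hsucc
      exact Or.inr ⟨b, hb, hbr, _, hsucc'.1, .inter g _ hgr hlab hsucc', hq⟩
  | union p _ hlab ih =>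
    rcases ih with ⟨hpT, hnl, hr⟩ | ⟨b, hb, hbr, g, hg, hgr, rfl⟩
    · rw [graftCode_h, graftLabel_of_not_isLeaf hpT hnl] at hlab
      rw [graftStrategy_of_not_isLeaf hpT hnl]
      exact graftPos_of_reach (hσ p hr hlab).1 (.union p hr hlab)
    · rw [graftCode_h, graftLabel_conc hb hg] at hlab
      rw [graftStrategy_conc hb hg]
      exact Or.inr ⟨b, hb, hbr, _, (hτ b hb hbr g hgr hlab).1, .union g hgr hlab, rfl⟩
  | lim c hne hch _ ih => exact graftPos_seqSup hne hch ih

lemma reach_graftCode_of_reach (hσ : IsLegalStrategy (graftCode code D hκ) σ)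
    (h : Reach code σ p) : Reach (graftCode code D hκ) σ p ∧ p ∈ code.T := by
  induction h with
  | root => exact ⟨.root, code.root_mem⟩
  | inter p q _ hlab hsucc ih =>
    have hlab' : (graftCode code D hκ).h p = .inter :=
      (graftLabel_of_not_isLeaf ih.2 (code.not_isLeaf_of_h_eq_inter hlab)).trans hlab
    exact ⟨.inter p q ih.1 hlab' (immSucc_graftTree_of_immSucc hsucc), hsucc.1⟩
  | union p _ hlab ih =>
    have hnl := code.not_isLeaf_of_h_eq_union hlab
    have hlab' : (graftCode code D hκ).h p = .union :=
      (graftLabel_of_not_isLeaf ih.2 hnl).trans hlab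
    exact ⟨.union p ih.1 hlab', (immSucc_of_immSucc_graftTree ih.2 hnl (hσ p ih.1 hlab')).1⟩
  | lim c hne hch _ ih =>
    exact ⟨.lim c hne hch fun p hp => (ih p hp).1,
      code.chain_sup c (fun p hp => (ih p hp).2) hne hch⟩

lemma reach_graftCode_conc_of_reach (hσ : IsLegalStrategy (graftCode code D hκ) σ)
    (hb : IsLeaf code.T b) (hbr : Reach (graftCode code D hκ) σ b)
    (h : Reach (D b) (fun g => strip b (σ (conc b g))) g) :
    Reach (graftCode code D hκ) σ (conc b g) ∧ g ∈ (D b).T := by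
  induction h with
  | root => exact ⟨by rwa [conc_seqRoot (code.mem_isSeq b hb.1)], (D b).root_mem⟩
  | inter g g' _ hlab hsucc ih =>
    have hlab' := (graftLabel_conc hb ih.2).trans hlab
    exact ⟨.inter _ _ ih.1 hlab' (immSucc_graftTree_conc hb hsucc), hsucc.1⟩
  | union g _ hlab ih =>
    have hlab' := (graftLabel_conc hb ih.2).trans hlab
    obtain ⟨hsucc, hq⟩ := immSucc_strip_of_immSucc_graftTree hb (hσ _ ih.1 hlab')
    exact ⟨by rw [hq]; exact .union _ ih.1 hlab', hsucc.1⟩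
  | lim d hne hdc _ ih =>
    refine ⟨?_, (D b).chain_sup d (fun g hg => (ih g hg).2) hne hdc⟩
    rw [← seqSup_image_conc hne hdc]
    exact .lim _ (hne.image _) (isChain_image_conc hdc) (by
      rintro _ ⟨g, hg, rfl⟩
      exact (ih g hg).1)

variable {x : Z}
  (hD : ∀ b s, IsLeaf code.T b → code.h b = .leaf s → ∀ x, IIWinsBStar (D b) x ↔ x ∈ s)
include hD

lemma iIWinsBStar_graftCode_of_iIWinsBStar (h : IIWinsBStar code x) :
    IIWinsBStar (graftCode code D hκ) x := by
  obtain ⟨σ, hσ, hσwin⟩ := h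
  let τ b := Classical.epsilon (IsWinningStrategy (D b) x)
  have hτ : ∀ b, IsLeaf code.T b → Reach code σ b → IsWinningStrategy (D b) x (τ b) := by
    intro b hb hbr
    obtain ⟨s, -, hs⟩ := code.label_leaf b hb.1 hb
    exact Classical.epsilon_spec ((hD b s hb hs x).2 (hσwin b s hbr hs))
  have hpos := fun p (hp : Reach (graftCode code D hκ) (graftStrategy code D σ τ) p) =>
    graftPos_of_reach_graftCode hσ (fun b hb hbr => (hτ b hb hbr).1) hp
  refine ⟨graftStrategy code D σ τ, fun p hp hlab => ?_, fun p s hp hlab => ?_⟩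
  · rcases hpos p hp with ⟨hpT, hnl, hr⟩ | ⟨b, hb, hbr, g, hg, hgr, rfl⟩
    · rw [graftCode_h, graftLabel_of_not_isLeaf hpT hnl] at hlab
      rw [graftStrategy_of_not_isLeaf hpT hnl]
      exact immSucc_graftTree_of_immSucc (hσ p hr hlab)
    · rw [graftCode_h, graftLabel_conc hb hg] at hlab
      rw [graftStrategy_conc hb hg]
      exact immSucc_graftTree_conc hb ((hτ b hb hbr).1 g hgr hlab)
  · rcases hpos p hp with ⟨hpT, hnl, -⟩ | ⟨b, hb, hbr, g, hg, hgr, rfl⟩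
    · rw [graftCode_h, graftLabel_of_not_isLeaf hpT hnl] at hlab
      exact absurd (code.isLeaf_of_h_eq_leaf hpT hlab) hnl
    · rw [graftCode_h, graftLabel_conc hb hg] at hlab
      exact (hτ b hb hbr).2 g s hgr hlab

lemma iIWinsBStar_of_iIWinsBStar_graftCode (h : IIWinsBStar (graftCode code D hκ) x) :
    IIWinsBStar code x := by
  obtain ⟨σ, hσ, hσwin⟩ := h
  refine ⟨σ, fun p hp hlab => ?_, fun p s hp hlab => ?_⟩
  · obtain ⟨hpg, hpT⟩ := reach_graftCode_of_reach hσ hp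
    have hnl := code.not_isLeaf_of_h_eq_union hlab
    exact immSucc_of_immSucc_graftTree hpT hnl
      (hσ p hpg ((graftLabel_of_not_isLeaf hpT hnl).trans hlab))
  · obtain ⟨hpg, hpT⟩ := reach_graftCode_of_reach hσ hp
    have hb := code.isLeaf_of_h_eq_leaf hpT hlab
    refine (hD p s hb hlab x).1
      ⟨fun g => strip p (σ (conc p g)), fun g hg hglab => ?_, fun g t hg hglab => ?_⟩
    · obtain ⟨hgg, hgT⟩ := reach_graftCode_conc_of_reach hσ hb hpg hg
      exact (immSucc_strip_of_immSucc_graftTree hb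
        (hσ _ hgg ((graftLabel_conc hb hgT).trans hglab))).1
    · obtain ⟨hgg, hgT⟩ := reach_graftCode_conc_of_reach hσ hb hpg hg
      exact hσwin _ t hgg ((graftLabel_conc hb hgT).trans hglab)

lemma iIWinsBStar_graftCode_iff : IIWinsBStar (graftCode code D hκ) x ↔ IIWinsBStar code x :=
  ⟨iIWinsBStar_of_iIWinsBStar_graftCode hD, iIWinsBStar_graftCode_of_iIWinsBStar hD⟩

end GraftGame

section BorelStar

variable {Z : Type*} {Basic Basic' : Set (Set Z)}

theorem isBorelStar_setOf_iIWinsBStar (hκ : ℵ₀ ≤ κ) (hBasic' : Basic'.Nonempty)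
    (hBasic : ∀ s ∈ Basic, IsBorelStar κ Basic' s) (code : BorelStarCode κ Z Basic) :
    IsBorelStar κ Basic' {x | IIWinsBStar code x} := by
  obtain ⟨s₀, hs₀⟩ := hBasic'
  have : Nonempty (BorelStarCode κ Z Basic') :=
    ⟨leafCode (Cardinal.one_lt_aleph0.trans_le hκ) hs₀⟩
  let IsCodeFor (b : PreSeq κ) (C : BorelStarCode κ Z Basic') : Prop :=
    ∀ s, code.h b = .leaf s → ∀ x, IIWinsBStar C x ↔ x ∈ s
  let D b := Classical.epsilon (IsCodeFor b)
  have hD : ∀ b s, IsLeaf code.T b → code.h b = .leaf s →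
      ∀ x, IIWinsBStar (D b) x ↔ x ∈ s := by
    intro b s hb hs
    obtain ⟨t, ht, hbt⟩ := code.label_leaf b hb.1 hb
    obtain ⟨C, rfl⟩ := hBasic t ht
    have hC : IsCodeFor b C := by
      intro s' hs' x
      obtain rfl : s' = {x | IIWinsBStar C x} := by simpa [hbt] using hs'.symm
      rfl
    exact Classical.epsilon_spec (p := IsCodeFor b) ⟨C, hC⟩ s hs
  exact ⟨graftCode code D hκ, by ext x; exact (iIWinsBStar_graftCode_iff hD).symm⟩

lemma exists_surjective_of_mk_le {ι : Type} [Nonempty ι] (hι : Cardinal.mk ι ≤ κ) :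
    ∃ r : O κ → ι, Function.Surjective r := by
  obtain ⟨e⟩ : Nonempty (ι ↪ O κ) := by
    rw [← Cardinal.lift_mk_le', mk_O, Cardinal.lift_uzero]
    exact Cardinal.lift_le.2 hι
  exact ⟨Function.invFun e, Function.invFun_surjective e.injective⟩

lemma isBorelStar_iUnion (hκ : ℵ₀ ≤ κ) (hBasic : Basic.Nonempty) {ι : Type} [Nonempty ι]
    (hι : Cardinal.mk ι ≤ κ) {A : ι → Set Z} (hA : ∀ i, IsBorelStar κ Basic (A i)) :
    IsBorelStar κ Basic (⋃ i, A i) := by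
  obtain ⟨r, hr⟩ := exists_surjective_of_mk_le hι
  have := isBorelStar_setOf_iIWinsBStar hκ hBasic (by rintro _ ⟨j, rfl⟩; exact hA (r j))
    (fanCode hκ (A ∘ r) .union (.inr rfl))
  convert this using 1
  ext x
  rw [Set.mem_ofPred_eq, iIWinsBStar_fanCode_union_iff, Set.mem_iUnion]
  exact hr.exists

lemma isBorelStar_iInter (hκ : ℵ₀ ≤ κ) (hBasic : Basic.Nonempty) {ι : Type} [Nonempty ι]
    (hι : Cardinal.mk ι ≤ κ) {A : ι → Set Z} (hA : ∀ i, IsBorelStar κ Basic (A i)) :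
    IsBorelStar κ Basic (⋂ i, A i) := by
  obtain ⟨r, hr⟩ := exists_surjective_of_mk_le hι
  have := isBorelStar_setOf_iIWinsBStar hκ hBasic (by rintro _ ⟨j, rfl⟩; exact hA (r j))
    (fanCode hκ (A ∘ r) .inter (.inl rfl))
  convert this using 1
  ext x
  rw [Set.mem_ofPred_eq, iIWinsBStar_fanCode_inter_iff, Set.mem_iInter]
  exact hr.forall

end BorelStar

section Borel

lemma univ_mem_basicOpens (hκ : κ ≠ 0) : (univ : Set (Point κ)) ∈ basicOpens κ :=
  ⟨0, Cardinal.ord_pos.2 (pos_iff_ne_zero.2 hκ), fun _ => true, by simp [basicOpen]⟩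

lemma isBorelStar_empty (hκ : ℵ₀ ≤ κ) :
    IsBorelStar κ (basicOpens κ) (∅ : Set (Point κ)) := by
  have hκ₀ : κ ≠ 0 := (Cardinal.aleph0_pos.trans_le hκ).ne'
  have hκ₁ : 1 < κ := Cardinal.one_lt_aleph0.trans_le hκ
  let γ₀ : O κ := ⟨0, Cardinal.ord_pos.2 (pos_iff_ne_zero.2 hκ₀)⟩
  have hempty : ⋂ v : Bool, basicOpen κ 1 (fun _ => v) = ∅ := by
    refine Set.eq_empty_of_forall_notMem fun η hη => ?_
    simpa [basicOpen, γ₀] using Set.mem_iInter.1 hη (!η γ₀) γ₀ zero_lt_one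
  rw [← hempty]
  exact isBorelStar_iInter hκ ⟨_, univ_mem_basicOpens hκ₀⟩
    ((Cardinal.lt_aleph0_of_finite Bool).le.trans hκ)
    fun v => isBorelStar_of_mem hκ₁ ⟨1, by rwa [Cardinal.lt_ord, Ordinal.card_one], _, rfl⟩

theorem isBorelStar_of_isKBorel (hκ : ℵ₀ ≤ κ) {A : Set (Point κ)} (hA : IsKBorel κ A) :
    IsBorelStar κ (basicOpens κ) A := by
  have hκ₁ : 1 < κ := Cardinal.one_lt_aleph0.trans_le hκ
  have hκ₀ : κ ≠ 0 := (zero_lt_one.trans hκ₁).ne'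
  induction hA with
  | basic s hs => exact isBorelStar_of_mem hκ₁ hs
  | iUnion ι hι A _ ih =>
    cases isEmpty_or_nonempty ι
    · simpa using isBorelStar_empty hκ
    · exact isBorelStar_iUnion hκ ⟨_, univ_mem_basicOpens hκ₀⟩ hι ih
  | iInter ι hι A _ ih =>
    cases isEmpty_or_nonempty ι
    · simpa using isBorelStar_of_mem hκ₁ (univ_mem_basicOpens hκ₀)
    · exact isBorelStar_iInter hκ ⟨_, univ_mem_basicOpens hκ₀⟩ hι ih

end Borel

section Preimage

variable {Z W : Type*} {Basic : Set (Set Z)}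

def BLabel.preimage (f : W → Z) : BLabel Z → BLabel W
  | .inter => .inter
  | .union => .union
  | .leaf s => .leaf (f ⁻¹' s)

variable {f : W → Z} {l : BLabel Z}

@[simp]
lemma BLabel.preimage_eq_inter_iff : l.preimage f = .inter ↔ l = .inter := by
  cases l <;> simp [BLabel.preimage]

@[simp]
lemma BLabel.preimage_eq_union_iff : l.preimage f = .union ↔ l = .union := by
  cases l <;> simp [BLabel.preimage]

lemma BLabel.preimage_eq_leaf_iff {t : Set W} :
    l.preimage f = .leaf t ↔ ∃ s, l = .leaf s ∧ f ⁻¹' s = t := by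
  cases l <;> simp [BLabel.preimage]

variable (f) in
def preimageCode (code : BorelStarCode κ Z Basic) :
    BorelStarCode κ W ((f ⁻¹' ·) '' Basic) where
  T := code.T
  h p := (code.h p).preimage f
  mem_isSeq := code.mem_isSeq
  root_mem := code.root_mem
  downward := code.downward
  card_le := code.card_le
  no_long_chain := code.no_long_chain
  chain_sup := code.chain_sup
  label_leaf p hp hleaf := by
    obtain ⟨s, hs, hlab⟩ := code.label_leaf p hp hleaf
    exact ⟨f ⁻¹' s, ⟨s, hs, rfl⟩, BLabel.preimage_eq_leaf_iff.2 ⟨s, hlab, rfl⟩⟩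
  label_node p hp hnl := by simpa using code.label_node p hp hnl

variable {code : BorelStarCode κ Z Basic} {σ : PreSeq κ → PreSeq κ} {p : PreSeq κ}

@[simp]
lemma preimageCode_T : (preimageCode f code).T = code.T := rfl

@[simp]
lemma preimageCode_h : (preimageCode f code).h p = (code.h p).preimage f := rfl

lemma reach_preimageCode_iff : Reach (preimageCode f code) σ p ↔ Reach code σ p := by
  constructor <;> intro h <;> induction h with
  | root => exact .root
  | inter p q _ hlab hsucc ih => exact .inter p q ih (by simpa using hlab) hsucc
  | union p _ hlab ih => exact .union p ih (by simpa using hlab)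
  | lim c hne hch _ ih => exact .lim c hne hch ih

lemma iIWinsBStar_preimageCode_iff (x : W) :
    IIWinsBStar (preimageCode f code) x ↔ IIWinsBStar code (f x) := by
  refine exists_congr fun σ => and_congr ?_ ?_
  · simp only [reach_preimageCode_iff, preimageCode_T, preimageCode_h,
      BLabel.preimage_eq_union_iff]
  · simp only [reach_preimageCode_iff, preimageCode_h, BLabel.preimage_eq_leaf_iff]
    constructor
    · exact fun h p s hp hs => h p _ hp ⟨s, hs, rfl⟩
    · rintro h p _ hp ⟨s, hs, rfl⟩
      exact h p s hp hs

end Preimage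

end

theorem isBorelStar_preimage_general (κ : Cardinal.{0}) (hκ₁ : ℵ₀ < κ)
    (f : Point κ → Point κ) (hf : IsBorelFun κ f)
    (B : Set (Point κ)) (hB : IsBorelStar κ (basicOpens κ) B) :
    IsBorelStar κ (basicOpens κ) (f ⁻¹' B) := by
  obtain ⟨code, rfl⟩ := hB
  have hlabels : ∀ t ∈ (f ⁻¹' ·) '' basicOpens κ, IsBorelStar κ (basicOpens κ) t := by
    rintro _ ⟨s, hs, rfl⟩
    exact isBorelStar_of_isKBorel hκ₁.le (hf s (TopologicalSpace.isOpen_generateFrom_of_mem hs))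
  have hbasic : (basicOpens κ).Nonempty :=
    ⟨_, univ_mem_basicOpens (Cardinal.aleph0_pos.trans hκ₁).ne'⟩
  simpa [iIWinsBStar_preimageCode_iff] using
    isBorelStar_setOf_iIWinsBStar hκ₁.le hbasic hlabels (preimageCode f code)

/-- Claim in the proof of Theorem 3.5. If `f : 2^κ → 2^κ` is a Borel
function and `B ⊆ 2^κ` is a `Borel*` set, then `f⁻¹[B]` is a `Borel*` set. -/
theorem isBorelStar_preimage (κ : Cardinal.{0}) (hκ₁ : ℵ₀ < κ) (hκ₂ : κ ^< κ = κ)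
    (f : Point κ → Point κ) (hf : IsBorelFun κ f)
    (B : Set (Point κ)) (hB : IsBorelStar κ (basicOpens κ) B) :
    IsBorelStar κ (basicOpens κ) (f ⁻¹' B) :=
  isBorelStar_preimage_general κ hκ₁ f hf B hB

end GenCantor
end
end
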